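/- arXiv:math/0501060 — 5 statements merged into one kernel-verified Lean document; each statement's English description precedes it below -/
import Mathlib

section
/- For every hash sequence of n cars on m places with 1 ≤ n < m, the place V is empty at the end of the parking process, i.e. H_V = 0. -/
open MeasureTheory Filter
open scoped BigOperators

attribute [local instance] Classical.propDecidable

namespace Parking

variable {m : ℕ}

/-- Final parking spot of a car whose first try is place `s`, given the set `occ`
of currently occupied places (places are cyclic, i.e. elements of `ZMod m`). -/
noncomputable def spot (occ : Finset (ZMod m)) (s : ZMod m) : ZMod m :=
  if h : ∃ t : ℕ, s + (t : ZMod m) ∉ occ then s + ((Nat.find h : ℕ) : ZMod m) else s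

/-- Set of occupied places after the first `k` cars of the hash sequence `p` have parked. -/
noncomputable def occs (p : ℕ → ZMod m) : ℕ → Finset (ZMod m)
  | 0 => ∅
  | k + 1 => insert (spot (occs p k) (p k)) (occs p k)

/-- Number of consecutive occupied places starting at `x` (0 if `x` is empty). -/
noncomputable def runLen (occ : Finset (ZMod m)) (x : ZMod m) : ℕ :=
  if h : ∃ t : ℕ, x + (t : ZMod m) ∉ occ then Nat.find h else 0

/-- First place of the block of consecutive occupied places containing `x`. -/
noncomputable def blockStart (occ : Finset (ZMod m)) (x : ZMod m) : ZMod m :=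
  if h : ∃ t : ℕ, x - ((t : ZMod m) + 1) ∉ occ then x - ((Nat.find h : ℕ) : ZMod m) else x

/-- Starting places of the blocks of consecutive occupied places. -/
noncomputable def blockStarts (occ : Finset (ZMod m)) : Finset (ZMod m) :=
  occ.filter (fun x => x - 1 ∉ occ)

/-- The multiset of sizes of the blocks of consecutive occupied places. -/
noncomputable def blockSizes (occ : Finset (ZMod m)) : Multiset ℕ :=
  (blockStarts occ).val.map (runLen occ)

/-- `B n p k` : size of the `k`-th largest block (1-indexed, `0` if there are fewer
than `k` blocks) once the `n` first cars of the hash sequence `p` have parked. -/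
noncomputable def B (n : ℕ) (p : ℕ → ZMod m) (k : ℕ) : ℕ :=
  ((Multiset.sort (blockSizes (occs p n)) (· ≤ ·)).reverse).getD (k - 1) 0

/-- `R n p k` : size of the `k`-th block (1-indexed, `0` if there are fewer than `k`
blocks), blocks being sorted by increasing date of birth (increasing order of the first
arrival of a car of the block), once the `n` first cars of `p` have parked. -/
noncomputable def R (n : ℕ) (p : ℕ → ZMod m) (k : ℕ) : ℕ :=
  (((((List.range n).map
        (fun i => blockStart (occs p n) (spot (occs p i) (p i)))).reverse.dedup).reverse).map
      (runLen (occs p n))).getD (k - 1) 0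

/-- Number of places tried by car `i` beyond its first try. -/
noncomputable def offs (p : ℕ → ZMod m) (i : ℕ) : ℕ :=
  if h : ∃ t : ℕ, p i + (t : ZMod m) ∉ occs p i then Nat.find h else 0

/-- `H n p y` : number of cars among the `n` first cars of `p` that tried place `y`,
successfully or not. -/
noncomputable def H (n : ℕ) (p : ℕ → ZMod m) (y : ZMod m) : ℕ :=
  ((Finset.range n).filter (fun i => ∃ t : ℕ, t ≤ offs p i ∧ p i + (t : ZMod m) = y)).card

/-- `Y n p k` : number of cars whose first try is place `k` (periodic in `k`). -/
noncomputable def Y (n : ℕ) (p : ℕ → ZMod m) (k : ℤ) : ℕ :=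
  ((Finset.range n).filter (fun i => p i = (k : ZMod m))).card

/-- `A n p k = Y₁ + ⋯ + Y_k - k n / m`. -/
noncomputable def A (n : ℕ) (p : ℕ → ZMod m) (k : ℕ) : ℝ :=
  (∑ j ∈ Finset.range k, (Y n p (j + 1) : ℝ)) - (k : ℝ) * n / m

/-- `V n p` : the smallest `j ∈ {1, …, m}` at which `A` attains its minimum over `{1, …, m}`. -/
noncomputable def V (n : ℕ) (p : ℕ → ZMod m) : ℕ :=
  sInf {j | 1 ≤ j ∧ j ≤ m ∧ ∀ i, 1 ≤ i → i ≤ m → A n p j ≤ A n p i}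

/-- `C n p k = Y₁ + ⋯ + Y_k - k` for `0 ≤ k ≤ m`, extended to `ℤ` by `C (k + m) = C k - ℓ`. -/
noncomputable def C (n : ℕ) (p : ℕ → ZMod m) (k : ℤ) : ℤ :=
  ((∑ j ∈ Finset.range (k.emod m).toNat, (Y n p (j + 1) : ℤ)) - ((k.emod m).toNat : ℤ))
    - k.ediv m * ((m : ℤ) - (n : ℤ))

/-- Extension of a hash sequence `Fin n → Fin m` to a map `ℕ → ZMod m`. -/
def ext (m n : ℕ) (p : Fin n → Fin m) : ℕ → ZMod m :=
  fun i => if h : i < n then (((p ⟨i, h⟩) : ℕ) : ZMod m) else 0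

/-- Probability of an event under the uniform distribution on the `m ^ n` hash sequences. -/
noncomputable def parkProb (m n : ℕ) (ev : (ℕ → ZMod m) → Prop) : ℝ :=
  ((Finset.univ.filter (fun p : Fin n → Fin m => ev (ext m n p))).card : ℝ) / (m : ℝ) ^ n

/-- Expectation of a random variable under the uniform distribution on hash sequences. -/
noncomputable def parkExp (m n : ℕ) (X : (ℕ → ZMod m) → ℝ) : ℝ :=
  (∑ p : Fin n → Fin m, X (ext m n p)) / (m : ℝ) ^ n

/-- `φ(M,N,K) = binom(N−1,K−1) (K+1)^{K−1} M (M−K−1)^{N−K−1} (M−N−1) / M^N`. -/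
noncomputable def phi (M N K : ℕ) : ℝ :=
  (Nat.choose (N - 1) (K - 1) : ℝ) * ((K : ℝ) + 1) ^ (K - 1) * (M : ℝ)
      * ((M - K - 1 : ℕ) : ℝ) ^ (N - K - 1) * ((M - N - 1 : ℕ) : ℝ) / (M : ℝ) ^ N

/-- The density `f(λ,x) = (λ/√(2π)) x^{−1/2} (1−x)^{−3/2} exp(−λ²x/(2(1−x)))` on `(0,1)`. -/
noncomputable def fdens (l x : ℝ) : ℝ :=
  if 0 < x ∧ x < 1 then
    l / Real.sqrt (2 * Real.pi) * x ^ (-(1 : ℝ) / 2) * (1 - x) ^ (-(3 : ℝ) / 2)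
      * Real.exp (-(l ^ 2 * x) / (2 * (1 - x)))
  else 0

/-!
If some car tried place `y`, let `y - 1, …, y - r` be the maximal run of places before `y` that
are occupied at the end, so that `y - (r + 1)` stays empty. A car never passes a place that is
empty at the end, so the car that tried `y` and the `r` cars parked on the run all made their
first try among the `r + 1` places `y - r, …, y`. For `y = V` this is impossible: the walk `A` is
`m`-periodic, and its minimality at `V` says that `j ≤ m` consecutive places ending at `V`
receive at most `j n / m < j` first tries.
-/

open Finset

lemma natCast_injOn_Iio : Set.InjOn (Nat.cast : ℕ → ZMod m) (Set.Iio m) := fun a ha b hb h => by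
  rw [← ZMod.val_natCast_of_lt ha, ← ZMod.val_natCast_of_lt hb, h]

lemma intCast_add_one_injOn_Ico (k : ℕ) :
    Set.InjOn (fun j : ℕ => (((j : ℤ) + 1 : ℤ) : ZMod m)) (Ico k (k + m)) := by
  intro a ha b hb h
  simp only [coe_Ico, Set.mem_Ico] at ha hb
  have hdvd := (ZMod.intCast_eq_intCast_iff_dvd_sub _ _ _).1 h
  have := Int.eq_zero_of_abs_lt_dvd hdvd (abs_lt.2 ⟨by omega, by omega⟩)
  omega

noncomputable def arcLoad (n : ℕ) (p : ℕ → ZMod m) (y : ZMod m) (j : ℕ) : ℕ :=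
  #{i ∈ range n | ∃ w < j, p i + w = y}

section Occupation

variable {p : ℕ → ZMod m} {i k t : ℕ}

lemma occs_mono {k k' : ℕ} (h : k ≤ k') : occs p k ⊆ occs p k' := by
  induction k', h using Nat.le_induction with
  | base => exact subset_rfl
  | succ k' _ ih => exact ih.trans (subset_insert _ _)

lemma card_occs_le (p : ℕ → ZMod m) (k : ℕ) : #(occs p k) ≤ k := by
  induction k with
  | zero => simp [occs]
  | succ k ih => exact (card_insert_le _ _).trans (Nat.succ_le_succ ih)

lemma mem_occs {z : ZMod m} : z ∈ occs p k ↔ ∃ i < k, spot (occs p i) (p i) = z := by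
  induction k with
  | zero => simp [occs]
  | succ k ih =>
    rw [occs, mem_insert, ih]
    constructor
    · rintro (h | ⟨i, hi, hs⟩)
      exacts [⟨k, k.lt_succ_self, h.symm⟩, ⟨i, hi.trans k.lt_succ_self, hs⟩]
    · rintro ⟨i, hi, hs⟩
      rcases Nat.lt_succ_iff_lt_or_eq.1 hi with hi | rfl
      exacts [Or.inr ⟨i, hi, hs⟩, Or.inl hs.symm]

lemma le_card_filter_spot_eq_sub {n r : ℕ} {y : ZMod m} (hrm : r < m)
    (hrun : ∀ v, 1 ≤ v → v ≤ r → y - v ∈ occs p n) :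
    r ≤ #{c ∈ range n | ∃ v, 1 ≤ v ∧ v ≤ r ∧ spot (occs p c) (p c) = y - v} := by
  have hinj : Set.InjOn (fun v : ℕ => y - v) (Icc 1 r) := fun a ha b hb h => by
    simp only [coe_Icc, Set.mem_Icc] at ha hb
    exact natCast_injOn_Iio (by simp; omega) (by simp; omega) (sub_right_injective h)
  calc r = #((Icc 1 r).image (fun v : ℕ => y - v)) := by rw [card_image_of_injOn hinj]; simp
    _ ≤ _ := card_le_card_of_surjOn (fun c => spot (occs p c) (p c)) (by
        rintro _ hz
        obtain ⟨v, hv, rfl⟩ := mem_image.1 hz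
        obtain ⟨c, hc, hs⟩ := mem_occs.1 (hrun v (mem_Icc.1 hv).1 (mem_Icc.1 hv).2)
        exact ⟨c, mem_filter.2 ⟨mem_range.2 hc, v, (mem_Icc.1 hv).1, (mem_Icc.1 hv).2, hs⟩, hs⟩)

variable [NeZero m]

lemma exists_notMem_of_card_lt {occ : Finset (ZMod m)} (h : #occ < m) : ∃ z, z ∉ occ := by
  obtain ⟨z, -, hz⟩ :=
    exists_mem_notMem_of_card_lt_card (s := occ) (t := univ) (by rwa [card_univ, ZMod.card])
  exact ⟨z, hz⟩

lemma exists_add_notMem_occs (hi : i < m) : ∃ t : ℕ, p i + t ∉ occs p i := by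
  obtain ⟨z, hz⟩ := exists_notMem_of_card_lt ((card_occs_le p i).trans_lt hi)
  exact ⟨(z - p i).val, by rwa [ZMod.natCast_zmod_val, add_sub_cancel]⟩

lemma spot_eq_add_offs (hi : i < m) : spot (occs p i) (p i) = p i + offs p i := by
  rw [spot, offs, dif_pos (exists_add_notMem_occs hi), dif_pos (exists_add_notMem_occs hi)]

lemma add_mem_occs_of_lt_offs (hi : i < m) (ht : t < offs p i) : p i + t ∈ occs p i := by
  rw [offs, dif_pos (exists_add_notMem_occs hi)] at ht
  exact not_not.1 (Nat.find_min _ ht)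

lemma add_mem_occs_of_le_offs (hik : i < k) (him : i < m) (ht : t ≤ offs p i) :
    p i + t ∈ occs p k := by
  rcases ht.lt_or_eq with ht | rfl
  · exact occs_mono hik.le (add_mem_occs_of_lt_offs him ht)
  · rw [← spot_eq_add_offs him]
    exact occs_mono hik (by rw [occs]; exact mem_insert_self _ _)

lemma lt_of_sub_notMem_occs {u s : ℕ} (hik : i < k) (him : i < m) (hu : u ≤ offs p i)
    (hfree : p i + u - s ∉ occs p k) : u < s := by
  by_contra! hsu
  refine hfree ?_
  have : p i + u - s = p i + ((u - s : ℕ) : ZMod m) := by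
    push_cast [Nat.cast_sub hsu]; ring
  rw [this]
  exact add_mem_occs_of_le_offs hik him (by omega)

lemma exists_run_before {occ : Finset (ZMod m)} (h : #occ < m) (y : ZMod m) :
    ∃ r < m, y - ((r + 1 : ℕ) : ZMod m) ∉ occ ∧ ∀ v, 1 ≤ v → v ≤ r → y - v ∈ occ := by
  obtain ⟨z, hz⟩ := exists_notMem_of_card_lt h
  have hz' : y - (((y - 1 - z).val + 1 : ℕ) : ZMod m) ∉ occ := by
    push_cast; rw [ZMod.natCast_zmod_val]; convert hz using 2; ring
  have hex : ∃ s : ℕ, y - ((s + 1 : ℕ) : ZMod m) ∉ occ := ⟨_, hz'⟩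
  refine ⟨Nat.find hex, (Nat.find_min' hex hz').trans_lt (ZMod.val_lt _), Nat.find_spec hex,
    fun v hv1 hvr => ?_⟩
  have := not_not.1 (Nat.find_min hex (show v - 1 < Nat.find hex by omega))
  rwa [Nat.sub_add_cancel hv1] at this

lemma exists_le_arcLoad_of_tried {n : ℕ} (hn : n < m) (hi : i < n) (ht : t ≤ offs p i) :
    ∃ j, 1 ≤ j ∧ j ≤ m ∧ j ≤ arcLoad n p (p i + t) j := by
  set y := p i + (t : ZMod m) with hy
  obtain ⟨r, hrm, hfree, hrun⟩ := exists_run_before ((card_occs_le p n).trans_lt hn) y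
  have within_run : ∀ c < n, ∀ u ≤ offs p c, ∀ v ≤ r, p c + u + v = y → u + v ≤ r := by
    intro c hc u hu v hv hcy
    have := lt_of_sub_notMem_occs (s := r + 1 - v) hc (hc.trans hn) hu (by
      convert hfree using 2
      rw [← hcy]; push_cast [Nat.cast_sub (by omega : v ≤ r + 1)]; ring)
    omega
  set P := {c ∈ range n | ∃ v, 1 ≤ v ∧ v ≤ r ∧ spot (occs p c) (p c) = y - v}
  have hP_start : ∀ c ∈ P, ∃ v, 1 ≤ v ∧ offs p c + v ≤ r ∧ p c + (offs p c + v : ℕ) = y := by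
    intro c hc
    obtain ⟨hc, v, hv1, hvr, hs⟩ := mem_filter.1 hc
    rw [spot_eq_add_offs ((mem_range.1 hc).trans hn)] at hs
    have e : p c + offs p c + v = y := by rw [hs]; ring
    exact ⟨v, hv1, within_run c (mem_range.1 hc) _ le_rfl v hvr e,
      by push_cast; rw [← add_assoc]; exact e⟩
  have htr : t ≤ r := by simpa using within_run i hi t ht 0 (Nat.zero_le r) (by simp [hy])
  -- Otherwise `p i + (offs p i + v) = y = p i + t` with both offsets below `m`, yet `t ≤ offs p i`.
  have hiP : i ∉ P := by
    intro hiP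
    obtain ⟨v, hv1, hvr, he⟩ := hP_start i hiP
    have := natCast_injOn_Iio (show offs p i + v < m by omega) (show t < m by omega)
      (add_left_cancel (he.trans hy))
    omega
  refine ⟨r + 1, by omega, by omega, ?_⟩
  calc r + 1 ≤ #(insert i P) := by
        rw [card_insert_of_notMem hiP]
        exact Nat.succ_le_succ (le_card_filter_spot_eq_sub hrm hrun)
    _ ≤ arcLoad n p y (r + 1) := card_le_card (by
        intro c hc
        rcases mem_insert.1 hc with rfl | hc
        · exact mem_filter.2 ⟨mem_range.2 hi, t, by omega, rfl⟩
        · obtain ⟨v, -, hvr, he⟩ := hP_start c hc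
          exact mem_filter.2 ⟨(mem_filter.1 hc).1, _, by omega, he⟩)

end Occupation

section Walk

variable {n : ℕ} {p : ℕ → ZMod m}

noncomputable def cumY (n : ℕ) (p : ℕ → ZMod m) (k : ℕ) : ℕ :=
  ∑ j ∈ range k, Y n p (j + 1)

lemma A_eq_cumY (k : ℕ) : A n p k = cumY n p k - k * n / m := by
  simp [A, cumY]

lemma sum_Y_eq_card_filter {s : Finset ℕ}
    (hs : Set.InjOn (fun j : ℕ => (((j : ℤ) + 1 : ℤ) : ZMod m)) s) :
    ∑ j ∈ s, Y n p (j + 1) = #{i ∈ range n | ∃ j ∈ s, p i = (((j : ℤ) + 1 : ℤ) : ZMod m)} := by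
  simp only [Y]
  rw [← card_biUnion]
  · congr 1
    ext i
    simp only [mem_biUnion, mem_filter, mem_range]
    exact ⟨fun ⟨a, ha, hi, he⟩ => ⟨hi, a, ha, he⟩, fun ⟨hi, a, ha, he⟩ => ⟨a, ha, hi, he⟩⟩
  · intro a ha b hb hab
    exact disjoint_filter.2 fun i _ hia hib => hab (hs ha hb (hia.symm.trans hib))

-- The `j` places ending at `y` are `y + m - j + 1, …, y + m`: shifting by `m` keeps the
-- natural-number subtraction from truncating.
lemma arcLoad_natCast_eq_sum (y : ℕ) {j : ℕ} (hj : j ≤ m) :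
    arcLoad n p y j = ∑ k ∈ Ico (y + m - j) (y + m), Y n p (k + 1) := by
  rw [sum_Y_eq_card_filter ((intCast_add_one_injOn_Ico _).mono
    (Ico_subset_Ico_right (by omega))), arcLoad]
  congr 1
  refine filter_congr fun i _ => ⟨fun ⟨w, hw, he⟩ => ⟨y + m - 1 - w, ?_, ?_⟩,
    fun ⟨k, hk, he⟩ => ⟨y + m - 1 - k, ?_, ?_⟩⟩
  · rw [mem_Ico]; omega
  · rw [show p i = y - w by rw [← he]; ring]
    push_cast [Nat.cast_sub (show w ≤ y + m - 1 by omega), Nat.cast_sub (show 1 ≤ y + m by omega),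
      ZMod.natCast_self]
    ring
  · rw [mem_Ico] at hk; omega
  · rw [he]
    push_cast [Nat.cast_sub (show k ≤ y + m - 1 by rw [mem_Ico] at hk; omega),
      Nat.cast_sub (show 1 ≤ y + m by rw [mem_Ico] at hk; omega), ZMod.natCast_self]
    ring

lemma V_spec (hm : 0 < m) :
    1 ≤ V n p ∧ V n p ≤ m ∧ ∀ i, 1 ≤ i → i ≤ m → A n p (V n p) ≤ A n p i := by
  obtain ⟨j, hj, hmin⟩ := exists_min_image (Icc 1 m) (A n p) ⟨1, mem_Icc.2 ⟨le_rfl, hm⟩⟩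
  have hne : {j | 1 ≤ j ∧ j ≤ m ∧ ∀ i, 1 ≤ i → i ≤ m → A n p j ≤ A n p i}.Nonempty :=
    ⟨j, (mem_Icc.1 hj).1, (mem_Icc.1 hj).2, fun i hi1 hi2 => hmin i (mem_Icc.2 ⟨hi1, hi2⟩)⟩
  exact Nat.sInf_mem hne

variable [NeZero m]

lemma sum_Ico_Y (k : ℕ) : ∑ j ∈ Ico k (k + m), Y n p (j + 1) = n := by
  rw [sum_Y_eq_card_filter (intCast_add_one_injOn_Ico k), filter_true_of_mem, card_range]
  intro i _
  refine ⟨k + (p i - k - 1).val, by simp [ZMod.val_lt], ?_⟩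
  push_cast
  rw [ZMod.natCast_zmod_val]
  ring

lemma cumY_add_m (k : ℕ) : cumY n p (k + m) = cumY n p k + n := by
  rw [cumY, ← sum_range_add_sum_Ico _ (Nat.le_add_right k m), sum_Ico_Y]
  rfl

lemma A_add_m (k : ℕ) : A n p (k + m) = A n p k := by
  rw [A_eq_cumY, A_eq_cumY, cumY_add_m]
  have : (m : ℝ) ≠ 0 := Nat.cast_ne_zero.2 (NeZero.ne m)
  push_cast
  field_simp
  ring

lemma A_V_le {k : ℕ} (hk : 1 ≤ k) : A n p (V n p) ≤ A n p k := by
  induction k using Nat.strong_induction_on with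
  | _ k ih =>
    by_cases hkm : k ≤ m
    · exact (V_spec (Nat.pos_of_neZero m)).2.2 k hk hkm
    · obtain ⟨k, rfl⟩ : ∃ k', k = k' + m := ⟨k - m, by omega⟩
      have := Nat.pos_of_neZero m
      rw [A_add_m]
      exact ih k (by omega) (by omega)

lemma arcLoad_V_lt (hn : n < m) {j : ℕ} (hj1 : 1 ≤ j) (hjm : j ≤ m) :
    arcLoad n p (V n p) j < j := by
  have hV := (V_spec (n := n) (p := p) (Nat.pos_of_neZero m)).1
  have hsum : (arcLoad n p (V n p) j : ℝ) + cumY n p (V n p + m - j) = cumY n p (V n p + m) := by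
    rw [arcLoad_natCast_eq_sum _ hjm, cumY, cumY, add_comm,
      ← sum_range_add_sum_Ico _ (show V n p + m - j ≤ V n p + m by omega)]
    push_cast
    rfl
  have hA := A_V_le (n := n) (p := p) (k := V n p + m - j) (by omega)
  rw [← A_add_m, A_eq_cumY, A_eq_cumY] at hA
  push_cast [Nat.cast_sub (show j ≤ V n p + m by omega)] at hA
  have hjn : (j : ℝ) * n / m < j := by
    rw [div_lt_iff₀ (Nat.cast_pos.2 (by omega))]
    exact mul_lt_mul_of_pos_left (by exact_mod_cast hn) (Nat.cast_pos.2 (by omega))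
  have : (V n p + m : ℝ) * n / m - (V n p + m - j) * n / m = j * n / m := by ring
  have : (arcLoad n p (V n p) j : ℝ) < j := by linarith
  exact_mod_cast this

end Walk

theorem place_V_is_empty_general
    (m n : ℕ) (h2 : n < m) (p : ℕ → ZMod m) :
    H n p ((V n p : ℕ) : ZMod m) = 0 := by
  have : NeZero m := ⟨by omega⟩
  rw [H, card_eq_zero, filter_eq_empty_iff]
  rintro i hi ⟨t, ht, hV⟩
  obtain ⟨j, hj1, hjm, hload⟩ := exists_le_arcLoad_of_tried h2 (mem_range.1 hi) ht
  rw [hV] at hload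
  exact (arcLoad_V_lt h2 hj1 hjm).not_ge hload

/-- The place `V` (first location of the minimum of the empirical-process walk `A`)
is empty at the end of the parking process. -/
theorem place_V_is_empty
    (m n : ℕ) (h1 : 1 ≤ n) (h2 : n < m) (p : ℕ → ZMod m) :
    H n p ((V n p : ℕ) : ZMod m) = 0 :=
  place_V_is_empty_general m n h2 p

end Parking
end

section
/- For all integers m, n with 1 ≤ n ≤ m − 1: m^n = m (n+1)^{n−1} + (m − n − 1) · Σ_{k=1}^{n−1} binom(n−1, k−1) (k+1)^{k−1} m (m−k−1)^{n−k−1}. -/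
open MeasureTheory Filter
open scoped BigOperators

attribute [local instance] Classical.propDecidable

namespace Parking

variable {m : ℕ}

/-!
Dividing by `m`, the identity is Abel's generalization of the binomial theorem
`(x + y + n)^n = (y + n)^n + x ∑_{j<n} C(n,j) (y + j)^j (x + n - j)^(n-j-1)`
at `x = m - n - 1`, `y = 2` (and `n - 1` in place of `n`).
Abel's identity follows by expanding `(y + j)^j = (s - (x + n - j))^j` with `s = x + y + n`:
after exchanging the sums, the coefficient of `s^i` for `i < n` is, up to the single missing
boundary term, an `(n - i)`-th finite difference of a polynomial of degree `n - i - 1`, hence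
collapses to that boundary term, and the boundary terms reassemble into `(s - x)^n`.
-/

open Finset

theorem sum_range_neg_one_pow_mul_choose_mul_pow_eq_zero {R : Type*} [CommRing R] {N d : ℕ}
    (h : d < N) (x : R) :
    ∑ l ∈ range (N + 1), (-1 : R) ^ l * N.choose l * (x + (N - l : ℕ)) ^ d = 0 := by
  have := congrFun (fwdDiff_iter_pow_eq_zero_of_lt (R := R) h) x
  rw [fwdDiff_iter_eq_sum_shift, ← sum_range_reflect, Pi.zero_apply] at this
  rw [← this]
  refine sum_congr rfl fun l hl => ?_
  have hl : l ≤ N := Nat.lt_succ_iff.mp (mem_range.mp hl)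
  rw [Nat.add_sub_cancel, Nat.sub_sub_self hl, Nat.choose_symm hl, zsmul_eq_mul, nsmul_one]
  push_cast
  ring

theorem sum_range_neg_one_pow_mul_choose_mul_pow_sub_one_eq_neg_pow {R : Type*} [CommRing R]
    {N : ℕ} (hN : N ≠ 0) (x : R) :
    ∑ l ∈ range N, (-1 : R) ^ l * N.choose l * (x + (N - l : ℕ)) ^ (N - 1) = (-x) ^ (N - 1) := by
  obtain ⟨M, rfl⟩ := Nat.exists_eq_add_one_of_ne_zero hN
  have := sum_range_neg_one_pow_mul_choose_mul_pow_eq_zero (Nat.lt_succ_self M) x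
  rw [sum_range_succ] at this
  simp only [Nat.add_sub_cancel, Nat.choose_self, Nat.sub_self, Nat.cast_zero, add_zero,
    Nat.cast_one, mul_one] at this ⊢
  rw [neg_pow]
  linear_combination this

theorem abel_add_pow {R : Type*} [CommRing R] (x y : R) (n : ℕ) :
    (x + y + n) ^ n = (y + n) ^ n +
      x * ∑ j ∈ range n, (n.choose j : R) * (y + j) ^ j * (x + (n - j : ℕ)) ^ (n - j - 1) := by
  set s := x + y + n
  have expand : ∀ j ∈ range n,
      (n.choose j : R) * (y + j) ^ j * (x + (n - j : ℕ)) ^ (n - j - 1) =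
        ∑ i ∈ range (j + 1), n.choose i * s ^ i * ((-1) ^ (j - i) * (n - i).choose (j - i) *
          (x + (n - i - (j - i) : ℕ)) ^ (n - i - 1)) := by
    intro j hj
    have hjn : j < n := mem_range.mp hj
    have hy : y + j = s + -(x + (n - j : ℕ)) := by
      rw [Nat.cast_sub hjn.le]; ring
    rw [hy, add_pow, mul_sum, sum_mul]
    refine sum_congr rfl fun i hi => ?_
    have hij : i ≤ j := Nat.lt_succ_iff.mp (mem_range.mp hi)
    have hchoose : (n.choose j : R) * j.choose i = n.choose i * (n - i).choose (j - i) := by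
      exact_mod_cast congrArg (Nat.cast (R := R)) (Nat.choose_mul hij)
    rw [show n - i - (j - i) = n - j by omega, show n - i - 1 = (j - i) + (n - j - 1) by omega,
      pow_add, neg_pow]
    linear_combination s ^ i * (-1) ^ (j - i) * (x + (n - j : ℕ)) ^ (j - i) *
      (x + (n - j : ℕ)) ^ (n - j - 1) * hchoose
  have inner : ∀ i ∈ range n,
      ∑ l ∈ range (n - i), n.choose i * s ^ i * ((-1) ^ l * (n - i).choose l *
          (x + (n - i - l : ℕ)) ^ (n - i - 1)) = n.choose i * s ^ i * (-x) ^ (n - i - 1) := by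
    intro i hi
    rw [← mul_sum, sum_range_neg_one_pow_mul_choose_mul_pow_sub_one_eq_neg_pow (by grind) x]
  have hbinom : (y + n) ^ n = ∑ i ∈ range n, s ^ i * (-x) ^ (n - i) * n.choose i + s ^ n := by
    rw [show y + n = s + -x by ring, add_pow, sum_range_succ, Nat.sub_self, Nat.choose_self]
    simp
  have absorb : ∀ i ∈ range n,
      x * (n.choose i * s ^ i * (-x) ^ (n - i - 1)) = -(s ^ i * (-x) ^ (n - i) * n.choose i) := by
    intro i hi
    rw [show n - i = (n - i - 1) + 1 by grind, pow_succ, Nat.add_sub_cancel]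
    ring
  rw [sum_congr rfl expand, sum_range_diag_flip n fun i l => n.choose i * s ^ i *
      ((-1) ^ l * (n - i).choose l * (x + (n - i - l : ℕ)) ^ (n - i - 1)), sum_congr rfl inner,
    hbinom, mul_sum, sum_congr rfl absorb, sum_neg_distrib]
  ring

/-- Decomposition of the `m^n` parking functions according to the size of the block
containing a given car:
`m^n = m (n+1)^{n−1} + (m−n−1) Σ_{k=1}^{n−1} binom(n−1,k−1)(k+1)^{k−1} m (m−k−1)^{n−k−1}`. -/
theorem parking_function_decomposition_identity
    (m n : ℕ) (h1 : 1 ≤ n) (h2 : n + 1 ≤ m) :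
    m ^ n = m * (n + 1) ^ (n - 1)
      + (m - n - 1) * ∑ k ∈ Finset.Icc 1 (n - 1),
          Nat.choose (n - 1) (k - 1) * (k + 1) ^ (k - 1) * m * (m - k - 1) ^ (n - k - 1) := by
  obtain ⟨N, rfl⟩ : ∃ N, n = N + 1 := ⟨n - 1, by omega⟩
  obtain ⟨x, rfl⟩ : ∃ x, m = x + N + 2 := ⟨m - N - 2, by omega⟩
  have abel : (x + 2 + N) ^ N = (2 + N) ^ N +
      x * ∑ j ∈ range N, N.choose j * (2 + j) ^ j * (x + (N - j)) ^ (N - j - 1) := by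
    exact_mod_cast abel_add_pow (x : ℤ) 2 N
  have reindex : ∑ k ∈ Icc 1 N, N.choose (k - 1) * (k + 1) ^ (k - 1) * (x + N + 2) *
        (x + N + 2 - k - 1) ^ (N + 1 - k - 1) =
      (x + N + 2) * ∑ j ∈ range N, N.choose j * (2 + j) ^ j * (x + (N - j)) ^ (N - j - 1) := by
    rw [mul_sum, ← Ico_add_one_right_eq_Icc, sum_Ico_eq_sum_range, Nat.add_sub_cancel]
    refine sum_congr rfl fun j hj => ?_
    have hj : j < N := mem_range.mp hj
    rw [show x + N + 2 - (1 + j) - 1 = x + (N - j) by omega,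
      show N + 1 - (1 + j) - 1 = N - j - 1 by omega, Nat.add_sub_cancel_left]
    ring
  rw [Nat.add_sub_cancel, show x + N + 2 - (N + 1) - 1 = x by omega, reindex, pow_succ',
    show x + N + 2 = x + 2 + N by ring, abel]
  ring

end Parking
end

section
/- For integers 1 ≤ n < m, the number of hash sequences p ∈ {1,…,m}^{{1,…,n}} for which place m is empty after all n cars have parked (i.e. the number of confined parking schemes of n cars on m places) equals (m − n) m^{n−1}. -/
/-!
Rotating every entry of a hash sequence by `c` rotates the final set of occupied places by `c`,
so the number of hash sequences leaving a given place empty is the same for all `m` places.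
Each hash sequence leaves exactly `m - n` places empty, so counting the pairs
(hash sequence, empty place) in two ways gives `m · N = m ^ n (m - n)` for the number `N` of
confined parking schemes.
-/

open MeasureTheory Filter
open scoped BigOperators

attribute [local instance] Classical.propDecidable

namespace Parking

variable {m : ℕ}

open Finset

lemma spot_map_addRight (occ : Finset (ZMod m)) (s c : ZMod m) :
    spot (occ.map (Equiv.addRight c).toEmbedding) (s + c) = spot occ s + c := by
  have hpred : (fun t : ℕ => s + c + (t : ZMod m) ∉ occ.map (Equiv.addRight c).toEmbedding)
      = fun t : ℕ => s + (t : ZMod m) ∉ occ := by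
    funext t
    simp [mem_map_equiv, add_right_comm s c]
  unfold spot
  simp only [hpred]
  split <;> ring

lemma occs_add_const (p : ℕ → ZMod m) (c : ZMod m) (k : ℕ) :
    occs (fun i => p i + c) k = (occs p k).map (Equiv.addRight c).toEmbedding := by
  induction k with
  | zero => rfl
  | succ k ih =>
    simp only [occs, ih, spot_map_addRight, map_insert, Equiv.coe_toEmbedding,
      Equiv.coe_addRight]

lemma occs_congr {p q : ℕ → ZMod m} {k : ℕ} (h : ∀ i < k, p i = q i) :
    occs p k = occs q k := by
  induction k with
  | zero => rfl
  | succ k ih =>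
    simp only [occs, ih fun i hi => h i (Nat.lt_succ_of_lt hi), h k (Nat.lt_succ_self k)]

section NeZero

variable [NeZero m]

lemma exists_add_natCast_notMem {occ : Finset (ZMod m)} {y : ZMod m} (hy : y ∉ occ)
    (s : ZMod m) : ∃ t : ℕ, s + (t : ZMod m) ∉ occ :=
  ⟨(y - s).val, by rwa [ZMod.natCast_zmod_val, add_sub_cancel]⟩

lemma spot_notMem {occ : Finset (ZMod m)} (h : #occ < m) (s : ZMod m) : spot occ s ∉ occ := by
  obtain ⟨y, hy⟩ : ∃ y, y ∉ occ := by
    by_contra! hall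
    rw [eq_univ_iff_forall.2 hall, card_univ, ZMod.card] at h
    exact h.false
  have hex := exists_add_natCast_notMem hy s
  rw [spot, dif_pos hex]
  exact Nat.find_spec hex

lemma card_occs (p : ℕ → ZMod m) {k : ℕ} (hk : k ≤ m) : #(occs p k) = k := by
  induction k with
  | zero => rfl
  | succ k ih => rw [occs, card_insert_of_notMem (spot_notMem (by omega) _), ih (by omega)]

lemma card_filter_notMem_occs (p : ℕ → ZMod m) {k : ℕ} (hk : k ≤ m) :
    #{x | x ∉ occs p k} = m - k := by
  rw [filter_notMem_eq_sdiff, card_univ_sdiff, ZMod.card, card_occs p hk]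

variable (m) in
def finEquivZMod : Fin m ≃ ZMod m where
  toFun a := (a : ℕ)
  invFun x := ⟨x.val, x.val_lt⟩
  left_inv a := Fin.ext (ZMod.val_cast_of_lt a.isLt)
  right_inv x := ZMod.natCast_zmod_val x

variable {n : ℕ}

/-- Adds `c` to every entry of a hash sequence, cyclically. -/
def rotate (c : ZMod m) : (Fin n → Fin m) ≃ (Fin n → Fin m) :=
  Equiv.arrowCongr (.refl _)
    (((finEquivZMod m).trans (Equiv.addRight c)).trans (finEquivZMod m).symm)

lemma ext_rotate (c : ZMod m) (p : Fin n → Fin m) {i : ℕ} (hi : i < n) :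
    ext m n (rotate c p) i = ext m n p i + c := by
  simp [ext, hi, rotate, finEquivZMod]

lemma occs_ext_rotate (c : ZMod m) (p : Fin n → Fin m) :
    occs (ext m n (rotate c p)) n = (occs (ext m n p) n).map (Equiv.addRight c).toEmbedding := by
  rw [occs_congr fun i hi => ext_rotate c p hi, occs_add_const]

variable (n) in
lemma card_filter_notMem_occs_ext (x : ZMod m) :
    #{p : Fin n → Fin m | x ∉ occs (ext m n p) n}
      = #{p : Fin n → Fin m | 0 ∉ occs (ext m n p) n} :=
  card_equiv (rotate (-x)) fun p => by simp [occs_ext_rotate, mem_map_equiv]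

end NeZero

/-- Place `m` is `0 : ZMod m`. -/
theorem card_confined_parking_schemes
    (m n : ℕ) (h1 : 1 ≤ n) (h2 : n < m) :
    (Finset.univ.filter
        (fun p : Fin n → Fin m => (0 : ZMod m) ∉ occs (ext m n p) n)).card
      = (m - n) * m ^ (n - 1) := by
  have : NeZero m := ⟨by omega⟩
  have hcount : m * #{p : Fin n → Fin m | 0 ∉ occs (ext m n p) n}
      = m * ((m - n) * m ^ (n - 1)) :=
    calc m * #{p : Fin n → Fin m | 0 ∉ occs (ext m n p) n}
        = ∑ x : ZMod m, #{p : Fin n → Fin m | x ∉ occs (ext m n p) n} := by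
          simp [card_filter_notMem_occs_ext]
      _ = ∑ p : Fin n → Fin m, #{x : ZMod m | x ∉ occs (ext m n p) n} := by
          simp only [card_filter]
          exact sum_comm
      _ = m ^ n * (m - n) := by simp [card_filter_notMem_occs _ h2.le]
      _ = m * ((m - n) * m ^ (n - 1)) := by
          rw [← Nat.sub_add_cancel h1, pow_succ', Nat.add_sub_cancel]
          ring
  exact Nat.eq_of_mul_eq_mul_left (by omega) hcount

end Parking
end

section
/- Let ζ : [0,1] → ℝ be continuous, and let E be the set of nonempty open intervals (l,r) ⊆ [0,1] such that ζ(r) = ζ(l) = min_{0≤s≤l} ζ(s) and ζ(s) > ζ(l) for all l < s < r. Assume: (H1) for any (l_1,r_1), (l_2,r_2) ∈ E with l_1 < l_2 one has ζ(l_1) > ζ(l_2); (H2) the complement in [0,1] of ∪_{(l,r)∈E} (l,r) has Lebesgue measure 0. Let ζ_j : [0,1] → ℝ converge uniformly on [0,1] to ζ, and for each j let 0 = t_{j,1} < t_{j,2} < ⋯ < t_{j,k_j+1} = 1 satisfy: ζ_j(t_{j,i}) = min_{0≤u≤t_{j,i}} ζ_j(u) for each i, and max_{1≤i≤k_j} (ζ_j(t_{j,i})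 − ζ_j(t_{j,i+1})) → 0 as j → ∞. Set Θ^{(j)} = {(t_{j,i}, t_{j,i+1} − t_{j,i}) : 1 ≤ i ≤ k_j} and Θ = {(l, r−l) : (l,r) ∈ E}. Then Θ^{(j)} converges to Θ in the following sense: for every y ∈ (0,1] such that no interval of E has length exactly y, (a) the number of points of Θ with second coordinate ≥ y is finite and, for all j large enough, equals the number of points of Θ^{(j)} with second coordinate ≥ y, and (b) every point of Θ with second coordinate ≥ y is the limit of a sequence of points of Θ^{(j)}. -/
open MeasureTheory Filter
open scoped BigOperators
open scoped ENNReal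

namespace Parking

/-- `(l, r)` is an excursion interval (above the current minimum) of `ζ` on `[0,1]` :
`ζ(r) = ζ(l) = min_{0 ≤ s ≤ l} ζ(s)` and `ζ(s) > ζ(l)` for `l < s < r`. -/
def isExc (ζ : ℝ → ℝ) (l r : ℝ) : Prop :=
  0 ≤ l ∧ l < r ∧ r ≤ 1 ∧ ζ r = ζ l ∧ (∀ s ∈ Set.Icc (0 : ℝ) l, ζ l ≤ ζ s) ∧
    ∀ s ∈ Set.Ioo l r, ζ l < ζ s

variable {ζ : ℝ → ℝ}

lemma exc_disj (hE1 : ∀ l₁ r₁ l₂ r₂, isExc ζ l₁ r₁ → isExc ζ l₂ r₂ → l₁ < l₂ → ζ l₂ < ζ l₁)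
    {l₁ r₁ l₂ r₂ : ℝ} (h1 : isExc ζ l₁ r₁) (h2 : isExc ζ l₂ r₂) (h : l₁ < l₂) : r₁ ≤ l₂ := by
  by_contra hc
  push_neg at hc
  have := h1.2.2.2.2.2 l₂ ⟨h, hc⟩
  have := hE1 _ _ _ _ h1 h2 h
  linarith

lemma exc_unique {l r r' : ℝ} (h : isExc ζ l r) (h' : isExc ζ l r') : r = r' := by
  by_contra hne
  rcases lt_or_gt_of_ne hne with hlt | hlt
  · have := h'.2.2.2.2.2 r ⟨h.2.1, hlt⟩
    have := h.2.2.2.1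
    linarith
  · have := h.2.2.2.2.2 r' ⟨h'.2.1, hlt⟩
    have := h'.2.2.2.1
    linarith

/-- Points at which `ζ` equals its running minimum are not in any excursion interior. -/
lemma not_covered {u : ℝ} (hmin : ∀ s ∈ Set.Icc (0:ℝ) u, ζ u ≤ ζ s) :
    u ∉ {s | ∃ l r, isExc ζ l r ∧ s ∈ Set.Ioo l r} := by
  rintro ⟨a, b, hab, hu1, hu2⟩
  have h1 : ζ a < ζ u := hab.2.2.2.2.2 u ⟨hu1, hu2⟩
  have h2 : ζ u ≤ ζ a := hmin a ⟨hab.1, le_of_lt hu1⟩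
  linarith

/-- Fact C: the running minimum is strictly above `ζ l` strictly before `l`. -/
lemma exc_left (hζ : ContinuousOn ζ (Set.Icc 0 1))
    (hE1 : ∀ l₁ r₁ l₂ r₂, isExc ζ l₁ r₁ → isExc ζ l₂ r₂ → l₁ < l₂ → ζ l₂ < ζ l₁)
    (hE2 : MeasureTheory.volume
        (Set.Icc (0 : ℝ) 1 \ {s | ∃ l r, isExc ζ l r ∧ s ∈ Set.Ioo l r}) = 0)
    {l r : ℝ} (h : isExc ζ l r) : ∀ x ∈ Set.Ico (0:ℝ) l, ζ l < ζ x := by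
  by_contra hc
  push_neg at hc
  obtain ⟨x, ⟨hx0, hxl⟩, hx⟩ := hc
  have hl1 : l ≤ 1 := le_trans (le_of_lt h.2.1) h.2.2.1
  have hxmin : ζ x = ζ l := le_antisymm hx (h.2.2.2.2.1 x ⟨hx0, le_of_lt hxl⟩)
  set Z : Set ℝ := Set.Icc x l ∩ ζ ⁻¹' {ζ l} with hZdef
  have hZsub : Set.Icc x l ⊆ Set.Icc (0:ℝ) 1 := Set.Icc_subset_Icc hx0 hl1
  have hZclosed : IsClosed Z :=
    ContinuousOn.preimage_isClosed_of_isClosed (hζ.mono hZsub) isClosed_Icc isClosed_singleton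
  have hZcomp : IsCompact Z := isCompact_Icc.of_isClosed_subset hZclosed Set.inter_subset_left
  -- Z has measure zero
  have hZ0 : volume Z = 0 := by
    refine measure_mono_null (fun u hu => ?_) hE2
    obtain ⟨⟨hux, hul⟩, huz⟩ := hu
    simp only [Set.mem_preimage, Set.mem_singleton_iff] at huz
    refine ⟨⟨le_trans hx0 hux, le_trans hul hl1⟩, ?_⟩
    exact not_covered (fun s hs => huz ▸ h.2.2.2.2.1 s ⟨hs.1, le_trans hs.2 hul⟩)
  -- pick u ∈ (x,l) \ Z
  have hu : ∃ u ∈ Set.Ioo x l, u ∉ Z := by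
    by_contra hcc
    push_neg at hcc
    have : volume (Set.Ioo x l) ≤ volume Z := measure_mono hcc
    rw [hZ0, Real.volume_Ioo] at this
    simp only [nonpos_iff_eq_zero, ENNReal.ofReal_eq_zero] at this
    linarith
  obtain ⟨u, ⟨hxu, hul⟩, huZ⟩ := hu
  have hζu : ζ l < ζ u := by
    rcases lt_or_eq_of_le (h.2.2.2.2.1 u ⟨le_trans hx0 (le_of_lt hxu), le_of_lt hul⟩) with h' | h'
    · exact h'
    · exact absurd ⟨⟨le_of_lt hxu, le_of_lt hul⟩, h'.symm⟩ huZ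
  -- a := sup of Z ∩ [x,u], b := inf of Z ∩ [u,l]
  set Za := Z ∩ Set.Icc x u with hZadef
  set Zb := Z ∩ Set.Icc u l with hZbdef
  have hZane : Za.Nonempty := ⟨x, ⟨⟨le_refl x, le_of_lt hxl⟩, hxmin⟩, le_refl x, le_of_lt hxu⟩
  have hZbne : Zb.Nonempty := ⟨l, ⟨⟨le_of_lt hxl, le_refl l⟩, rfl⟩, le_of_lt hul, le_refl l⟩
  have hZacomp : IsCompact Za := hZcomp.inter_right isClosed_Icc
  have hZbcomp : IsCompact Zb := hZcomp.inter_right isClosed_Icc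
  set a := sSup Za with hadef
  set b := sInf Zb with hbdef
  have haZ : a ∈ Za := hZacomp.sSup_mem hZane
  have hbZ : b ∈ Zb := hZbcomp.sInf_mem hZbne
  have hau : a < u := lt_of_le_of_ne haZ.2.2 (fun he => huZ (he ▸ haZ.1))
  have hub : u < b := lt_of_le_of_ne (hbZ.2.1) (fun he => huZ (he ▸ hbZ.1))
  have hζa : ζ a = ζ l := haZ.1.2
  have hζb : ζ b = ζ l := hbZ.1.2
  have hexc : isExc ζ a b := by
    refine ⟨le_trans hx0 haZ.1.1.1, lt_trans hau hub, le_trans hbZ.1.1.2 hl1, ?_, ?_, ?_⟩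
    · rw [hζa, hζb]
    · intro s hs
      rw [hζa]
      exact h.2.2.2.2.1 s ⟨hs.1, le_trans hs.2 (le_trans haZ.1.1.2 (le_refl l))⟩
    · intro s hs
      rw [hζa]
      have hsl : s ≤ l := le_trans (le_of_lt hs.2) hbZ.1.1.2
      have hs0 : 0 ≤ s := le_trans hx0 (le_trans haZ.1.1.1 (le_of_lt hs.1))
      rcases lt_or_eq_of_le (h.2.2.2.2.1 s ⟨hs0, hsl⟩) with h' | h'
      · exact h'
      · exfalso
        have hsZ : s ∈ Z := ⟨⟨le_trans haZ.1.1.1 (le_of_lt hs.1), hsl⟩, h'.symm⟩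
        rcases le_or_gt s u with hsu | hsu
        · exact absurd (le_csSup hZacomp.bddAbove ⟨hsZ, le_trans haZ.1.1.1 (le_of_lt hs.1), hsu⟩)
            (not_le_of_gt hs.1)
        · exact absurd (csInf_le hZbcomp.bddBelow ⟨hsZ, le_of_lt hsu, hsl⟩)
            (not_le_of_gt hs.2)
  have hal : a < l := lt_of_lt_of_le hau (le_of_lt hul)
  have := hE1 _ _ _ _ hexc h hal
  rw [hζa] at this
  linarith

/-- Fact D: the running minimum drops strictly below `ζ l` strictly after `r`. -/
lemma exc_right
    (hE1 : ∀ l₁ r₁ l₂ r₂, isExc ζ l₁ r₁ → isExc ζ l₂ r₂ → l₁ < l₂ → ζ l₂ < ζ l₁)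
    (hE2 : MeasureTheory.volume
        (Set.Icc (0 : ℝ) 1 \ {s | ∃ l r, isExc ζ l r ∧ s ∈ Set.Ioo l r}) = 0)
    {l r : ℝ} (h : isExc ζ l r) {x : ℝ} (hrx : r < x) (hx1 : x ≤ 1) :
    ∃ s, r < s ∧ s ≤ x ∧ ζ s < ζ l := by
  by_contra hc
  push_neg at hc
  have hsub : Set.Ioo r x ⊆ Set.Icc (0:ℝ) 1 \ {s | ∃ l' r', isExc ζ l' r' ∧ s ∈ Set.Ioo l' r'} := by
    rintro u ⟨hru, hux⟩
    have hu0 : (0:ℝ) ≤ u := le_trans h.1 (le_of_lt (lt_trans h.2.1 hru))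
    refine ⟨⟨hu0, le_trans (le_of_lt hux) hx1⟩, ?_⟩
    rintro ⟨a, b, hab, hau, hub⟩
    -- establish position of a
    rcases lt_trichotomy a l with hal | hal
    · -- disjointness: b ≤ l, but u < b and l < r < u
      have hbl : b ≤ l := exc_disj hE1 hab h hal
      have : u < l := lt_of_lt_of_le hub hbl
      have : l < u := lt_trans h.2.1 hru
      linarith
    · rcases hal with rfl | hal
      · have : b = r := exc_unique hab h
        rw [this] at hub
        linarith
      · have hζa : ζ a < ζ l := hE1 _ _ _ _ h hab hal
        -- but ζ a ≥ ζ l in all positional cases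
        rcases le_or_gt a r with har | har
        · rcases lt_or_eq_of_le har with har | har
          · have := h.2.2.2.2.2 a ⟨hal, har⟩
            linarith
          · rw [har] at hζa
            rw [h.2.2.2.1] at hζa
            linarith
        · have hax : a ≤ x := le_trans (le_of_lt hau) (le_of_lt hux)
          have := hc a har hax
          linarith
  have : volume (Set.Ioo r x) = 0 := measure_mono_null hsub hE2
  rw [Real.volume_Ioo] at this
  simp only [ENNReal.ofReal_eq_zero] at this
  linarith


/-- Two distinct long excursions have left endpoints at distance ≥ y. -/
lemma exc_sep (hE1 : ∀ l₁ r₁ l₂ r₂, isExc ζ l₁ r₁ → isExc ζ l₂ r₂ → l₁ < l₂ → ζ l₂ < ζ l₁)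
    {l r l' r' y : ℝ} (h : isExc ζ l r) (h' : isExc ζ l' r') (hy : y ≤ r - l)
    (hll : l < l') : y ≤ l' - l := by
  have := exc_disj hE1 h h' hll
  linarith

lemma finite_pairs
    (hE1 : ∀ l₁ r₁ l₂ r₂, isExc ζ l₁ r₁ → isExc ζ l₂ r₂ → l₁ < l₂ → ζ l₂ < ζ l₁)
    {y : ℝ} (hy : 0 < y) :
    {p : ℝ × ℝ | isExc ζ p.1 p.2 ∧ y ≤ p.2 - p.1}.Finite := by
  set P := {p : ℝ × ℝ | isExc ζ p.1 p.2 ∧ y ≤ p.2 - p.1} with hP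
  have key : ∀ p ∈ P, ∀ q ∈ P, p.1 < q.1 → (⌊p.1 / y⌋ : ℤ) < ⌊q.1 / y⌋ := by
    intro p hp q hq hlt
    have h1 : y ≤ q.1 - p.1 := exc_sep hE1 hp.1 hq.1 hp.2 hlt
    have h2 : p.1 / y + 1 ≤ q.1 / y := by
      rw [le_div_iff₀ hy, add_mul, div_mul_cancel₀ _ hy.ne', one_mul]; linarith
    have h3 : (⌊p.1 / y⌋ : ℤ) + 1 ≤ ⌊q.1 / y⌋ := by
      calc (⌊p.1 / y⌋ : ℤ) + 1 = ⌊p.1 / y + 1⌋ := (Int.floor_add_one _).symm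
        _ ≤ ⌊q.1 / y⌋ := Int.floor_le_floor h2
    omega
  have hL : (Prod.fst '' P).Finite := by
    refine Set.Finite.of_finite_image (f := fun l : ℝ => ⌊l / y⌋) ?_ ?_
    · refine Set.Finite.subset (Set.finite_Icc (0:ℤ) ⌊1/y⌋) ?_
      rintro - ⟨-, ⟨p, hp, rfl⟩, rfl⟩
      constructor
      · exact Int.floor_nonneg.mpr (div_nonneg hp.1.1 hy.le)
      · refine Int.floor_le_floor ?_
        have h1 : p.1 ≤ 1 := le_trans hp.1.2.1.le hp.1.2.2.1
        gcongr
    · rintro - ⟨p, hp, rfl⟩ - ⟨q, hq, rfl⟩ hpq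
      by_contra hne
      rcases lt_or_gt_of_ne hne with hlt | hlt
      · exact absurd hpq (ne_of_lt (key p hp q hq hlt))
      · exact absurd hpq.symm (ne_of_lt (key q hq p hp hlt))
  refine Set.Finite.of_finite_image (f := Prod.fst) hL ?_
  rintro p hp q hq hpq
  have : p.2 = q.2 := by
    refine exc_unique (ζ := ζ) (l := p.1) hp.1 ?_
    rw [hpq]; exact hq.1
  exact Prod.ext hpq this

/-- The localization property: `i` is a break index whose interval approximates `[l, r]`
within `ε`. -/
def locP (t : ℕ → ℕ → ℝ) (k : ℕ → ℕ) (l r ε : ℝ) (j i : ℕ) : Prop :=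
  1 ≤ i ∧ i ≤ k j ∧ l - ε < t j i ∧ t j i ≤ l + ε ∧ r - ε < t j (i + 1) ∧ t j (i + 1) ≤ r + ε

section discrete
variable (k : ℕ → ℕ) (t : ℕ → ℕ → ℝ)
variable (hk : ∀ j, 1 ≤ k j)
variable (ht0 : ∀ j, t j 1 = 0) (ht1 : ∀ j, t j (k j + 1) = 1)
variable (htmono : ∀ j, ∀ i, 1 ≤ i → i ≤ k j → t j i < t j (i + 1))

include htmono in
lemma t_mono : ∀ j i i', 1 ≤ i → i ≤ i' → i' ≤ k j + 1 → t j i ≤ t j i' := by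
  intro j i i' h1 h2 h3
  induction i' with
  | zero => omega
  | succ n ih =>
    rcases Nat.lt_or_ge i (n+1) with hlt | hge
    · have hn : i ≤ n := by omega
      have h1n : 1 ≤ n := by omega
      have := htmono j n h1n (by omega)
      have := ih (by omega) (by omega)
      linarith
    · have : i = n + 1 := by omega
      rw [this]

include ht0 ht1 htmono in
lemma t_mem : ∀ j i, 1 ≤ i → i ≤ k j + 1 → t j i ∈ Set.Icc (0:ℝ) 1 := by
  intro j i h1 h2
  constructor
  · rw [← ht0 j]; exact t_mono k t htmono j 1 i le_rfl h1 h2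
  · rw [← ht1 j]; exact t_mono k t htmono j i (k j + 1) h1 h2 le_rfl

include htmono in
lemma locP_unique {l r ε : ℝ} (hlr : l + ε ≤ r - ε) {j i i' : ℕ}
    (h : locP t k l r ε j i) (h' : locP t k l r ε j i') : i = i' := by
  obtain ⟨h1, h2, h3, h4, h5, h6⟩ := h
  obtain ⟨h1', h2', h3', h4', h5', h6'⟩ := h'
  by_contra hne
  rcases Nat.lt_or_ge i i' with hlt | hge
  · have : t j (i+1) ≤ t j i' := t_mono k t htmono j (i+1) i' (by omega) (by omega) (by omega)
    linarith
  · have hlt : i' < i := by omega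
    have : t j (i'+1) ≤ t j i := t_mono k t htmono j (i'+1) i (by omega) (by omega) (by omega)
    linarith

end discrete
end Parking

namespace Parking
variable {ζ : ℝ → ℝ}

lemma loc_eventually
    (hζ : ContinuousOn ζ (Set.Icc 0 1))
    (hE1 : ∀ l₁ r₁ l₂ r₂, isExc ζ l₁ r₁ → isExc ζ l₂ r₂ → l₁ < l₂ → ζ l₂ < ζ l₁)
    (hE2 : MeasureTheory.volume
        (Set.Icc (0 : ℝ) 1 \ {s | ∃ l r, isExc ζ l r ∧ s ∈ Set.Ioo l r}) = 0)
    (ζs : ℕ → ℝ → ℝ)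
    (hconv : TendstoUniformlyOn ζs ζ Filter.atTop (Set.Icc 0 1))
    (k : ℕ → ℕ) (hk : ∀ j, 1 ≤ k j)
    (t : ℕ → ℕ → ℝ)
    (ht0 : ∀ j, t j 1 = 0) (ht1 : ∀ j, t j (k j + 1) = 1)
    (htmono : ∀ j, ∀ i, 1 ≤ i → i ≤ k j → t j i < t j (i + 1))
    (htmin : ∀ j, ∀ i, 1 ≤ i → i ≤ k j + 1 →
      ∀ u ∈ Set.Icc (0 : ℝ) (t j i), ζs j (t j i) ≤ ζs j u)
    (htgap : Filter.Tendsto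
      (fun j => (Finset.Icc 1 (k j)).sup' (Finset.nonempty_Icc.mpr (hk j))
        (fun i => ζs j (t j i) - ζs j (t j (i + 1))))
      Filter.atTop (nhds 0))
    {l r : ℝ} (h : isExc ζ l r) {ε : ℝ} (hε : 0 < ε) (hlr : l + ε ≤ r - ε) :
    ∀ᶠ j in Filter.atTop, ∃ i, locP t k l r ε j i := by
  have hl0 : 0 ≤ l := h.1
  have hlr' : l < r := h.2.1
  have hr1 : r ≤ 1 := h.2.2.1
  have hl1 : l ≤ 1 := by linarith
  -- the three positive constants
  have hδex : ∃ δ > 0, ∀ s, l + ε ≤ s → s ≤ r - ε → ζ l + δ ≤ ζ s := by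
    have hne : (Set.Icc (l+ε) (r-ε)).Nonempty := Set.nonempty_Icc.mpr hlr
    have hsub : Set.Icc (l+ε) (r-ε) ⊆ Set.Icc 0 1 :=
      Set.Icc_subset_Icc (by linarith) (by linarith)
    obtain ⟨c, hc, hcmin⟩ := isCompact_Icc.exists_isMinOn hne (hζ.mono hsub)
    have hcio : ζ l < ζ c := h.2.2.2.2.2 c ⟨by linarith [hc.1], by linarith [hc.2]⟩
    exact ⟨ζ c - ζ l, by linarith, fun s h1 h2 => by
      linarith [isMinOn_iff.mp hcmin s ⟨h1, h2⟩]⟩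
  have hμex : ∃ μ > 0, ∀ s, 0 ≤ s → s ≤ l - ε → ζ l + μ ≤ ζ s := by
    rcases lt_or_ge (l - ε) 0 with hneg | hpos
    · exact ⟨1, one_pos, fun s hs1 hs2 => absurd (hs1.trans hs2) (by linarith)⟩
    · have hne : (Set.Icc (0:ℝ) (l-ε)).Nonempty := Set.nonempty_Icc.mpr hpos
      obtain ⟨c, hc, hcmin⟩ := isCompact_Icc.exists_isMinOn hne
        (hζ.mono (Set.Icc_subset_Icc le_rfl (by linarith)))
      have : ζ l < ζ c := exc_left hζ hE1 hE2 h c ⟨hc.1, by linarith [hc.2]⟩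
      exact ⟨ζ c - ζ l, by linarith, fun s h1 h2 => by
        linarith [isMinOn_iff.mp hcmin s ⟨h1, h2⟩]⟩
  have hνex : ∃ ν > 0, r + ε ≤ 1 → ∃ s, r < s ∧ s ≤ r + ε ∧ ζ s ≤ ζ l - ν := by
    rcases le_or_gt (r + ε) 1 with hle | hgt
    · obtain ⟨s, hs1, hs2, hs3⟩ := exc_right hE1 hE2 h (x := r + ε) (by linarith) hle
      exact ⟨ζ l - ζ s, by linarith, fun _ => ⟨s, hs1, hs2, by linarith⟩⟩
    · exact ⟨1, one_pos, fun hr => absurd hr (by linarith)⟩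
  obtain ⟨δ, hδ0, hδ⟩ := hδex
  obtain ⟨μ, hμ0, hμ⟩ := hμex
  obtain ⟨ν, hν0, hν⟩ := hνex
  set κ := min δ (min μ ν) with hκdef
  have hκ0 : 0 < κ := lt_min hδ0 (lt_min hμ0 hν0)
  have hκδ : κ ≤ δ := min_le_left _ _
  have hκμ : κ ≤ μ := le_trans (min_le_right _ _) (min_le_left _ _)
  have hκν : κ ≤ ν := le_trans (min_le_right _ _) (min_le_right _ _)
  have hA : ∀ᶠ j in Filter.atTop, ∀ x ∈ Set.Icc (0:ℝ) 1, dist (ζ x) (ζs j x) < κ/4 :=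
    (Metric.tendstoUniformlyOn_iff.mp hconv) (κ/4) (by positivity)
  have hB : ∀ᶠ j in Filter.atTop,
      (Finset.Icc 1 (k j)).sup' (Finset.nonempty_Icc.mpr (hk j))
        (fun i => ζs j (t j i) - ζs j (t j (i + 1))) < κ/4 :=
    htgap.eventually (eventually_lt_nhds (by positivity))
  filter_upwards [hA, hB] with j hj1 hj2
  have herr : ∀ x ∈ Set.Icc (0:ℝ) 1, |ζ x - ζs j x| < κ/4 := by
    intro x hx; rw [← Real.dist_eq]; exact hj1 x hx
  have hgap : ∀ i, 1 ≤ i → i ≤ k j → ζs j (t j i) - ζs j (t j (i+1)) < κ/4 := by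
    intro i h1 h2
    exact lt_of_le_of_lt (Finset.le_sup' (f := fun i => ζs j (t j i) - ζs j (t j (i + 1)))
      (Finset.mem_Icc.mpr ⟨h1, h2⟩)) hj2
  -- the last break point ≤ l + ε
  set A := (Finset.Icc 1 (k j)).filter (fun i => t j i ≤ l + ε) with hAdef
  have hAne : A.Nonempty := ⟨1, Finset.mem_filter.mpr
    ⟨Finset.mem_Icc.mpr ⟨le_rfl, hk j⟩, by rw [ht0]; linarith⟩⟩
  set i := A.max' hAne with hidef
  have hiA := A.max'_mem hAne
  rw [Finset.mem_filter, Finset.mem_Icc] at hiA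
  obtain ⟨⟨hi1, hik⟩, hti⟩ := hiA
  have hmem_i : t j i ∈ Set.Icc (0:ℝ) 1 := t_mem k t ht0 ht1 htmono j i hi1 (by omega)
  have hmem_i1 : t j (i+1) ∈ Set.Icc (0:ℝ) 1 := t_mem k t ht0 ht1 htmono j (i+1) (by omega) (by omega)
  have hnext : l + ε < t j (i+1) := by
    rcases Nat.lt_or_ge i (k j) with hlt | hge
    · by_contra hc
      push_neg at hc
      have hmem : i + 1 ∈ A := Finset.mem_filter.mpr
        ⟨Finset.mem_Icc.mpr ⟨by omega, by omega⟩, hc⟩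
      have := A.le_max' (i+1) hmem
      omega
    · have hieq : i = k j := by omega
      rw [hieq, ht1]
      linarith
  have hmin_i1 : ∀ u ∈ Set.Icc (0:ℝ) (t j (i+1)), ζs j (t j (i+1)) ≤ ζs j u :=
    htmin j (i+1) (by omega) (by omega)
  have hl01 : l ∈ Set.Icc (0:ℝ) 1 := ⟨hl0, hl1⟩
  have hzl : ζs j (t j (i+1)) ≤ ζs j l := hmin_i1 l ⟨hl0, by linarith⟩
  have hzl2 : ζs j l ≤ ζ l + κ/4 := by
    have := abs_lt.mp (herr l hl01); linarith [this.1]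
  have hgapi : ζs j (t j i) - ζs j (t j (i+1)) < κ/4 := hgap i hi1 hik
  have hupper_i : ζs j (t j i) < ζ l + κ/2 := by linarith
  have herri := abs_lt.mp (herr (t j i) hmem_i)
  have herri1 := abs_lt.mp (herr (t j (i+1)) hmem_i1)
  -- (2)
  have h2 : l - ε < t j i := by
    rcases lt_or_ge l ε with hneg | hpos
    · linarith [hmem_i.1]
    · by_contra hc
      push_neg at hc
      have := hμ (t j i) hmem_i.1 hc
      linarith
  -- (3)
  have h3 : r - ε < t j (i+1) := by
    by_contra hc
    push_neg at hc
    have := hδ (t j (i+1)) (le_of_lt hnext) hc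
    linarith
  -- (4)
  have h4 : t j (i+1) ≤ r + ε := by
    rcases le_or_gt (t j (i+1)) (r + ε) with hle | hc
    · exact hle
    · exfalso
      have hr1' : r + ε ≤ 1 := le_trans hc.le hmem_i1.2
      obtain ⟨s, hs1, hs2, hs3⟩ := hν hr1'
      have hs01 : s ∈ Set.Icc (0:ℝ) 1 := ⟨by linarith, by linarith⟩
      have hzs : ζs j (t j (i+1)) ≤ ζs j s := hmin_i1 s ⟨hs01.1, by linarith⟩
      have herrs := abs_lt.mp (herr s hs01)
      have hζti : ζ l ≤ ζ (t j i) := by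
        rcases le_or_gt (t j i) l with hle2 | hlt2
        · exact h.2.2.2.2.1 (t j i) ⟨hmem_i.1, hle2⟩
        · exact le_of_lt (h.2.2.2.2.2 (t j i) ⟨hlt2, by linarith⟩)
      linarith
  exact ⟨i, hi1, hik, h2, hti, h3, h4⟩


set_option maxHeartbeats 2000000

/-- Aldous' extension of the invariance principle (weak form of Lemma 7 of Aldous 1997):
convergence, in the sense of vague convergence of point processes on `[0,1] × (0,1]`, of
the intervals between the `t_{j,i}`'s to the excursion intervals of `ζ`. -/
theorem excursion_lengths_converge
    (ζ : ℝ → ℝ) (hζ : ContinuousOn ζ (Set.Icc 0 1))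
    (hE1 : ∀ l₁ r₁ l₂ r₂, isExc ζ l₁ r₁ → isExc ζ l₂ r₂ → l₁ < l₂ → ζ l₂ < ζ l₁)
    (hE2 : MeasureTheory.volume
        (Set.Icc (0 : ℝ) 1 \ {s | ∃ l r, isExc ζ l r ∧ s ∈ Set.Ioo l r}) = 0)
    (ζs : ℕ → ℝ → ℝ)
    (hconv : TendstoUniformlyOn ζs ζ Filter.atTop (Set.Icc 0 1))
    (k : ℕ → ℕ) (hk : ∀ j, 1 ≤ k j)
    (t : ℕ → ℕ → ℝ)
    (ht0 : ∀ j, t j 1 = 0) (ht1 : ∀ j, t j (k j + 1) = 1)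
    (htmono : ∀ j, ∀ i, 1 ≤ i → i ≤ k j → t j i < t j (i + 1))
    (htmin : ∀ j, ∀ i, 1 ≤ i → i ≤ k j + 1 →
      ∀ u ∈ Set.Icc (0 : ℝ) (t j i), ζs j (t j i) ≤ ζs j u)
    (htgap : Filter.Tendsto
      (fun j => (Finset.Icc 1 (k j)).sup' (Finset.nonempty_Icc.mpr (hk j))
        (fun i => ζs j (t j i) - ζs j (t j (i + 1))))
      Filter.atTop (nhds 0))
    (y : ℝ) (hy : y ∈ Set.Ioc (0 : ℝ) 1)
    (hyne : ¬ ∃ l r, isExc ζ l r ∧ r - l = y) :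
    ({q : ℝ × ℝ | ∃ l r, isExc ζ l r ∧ q = (l, r - l) ∧ y ≤ r - l}.Finite
        ∧ ∀ᶠ j in Filter.atTop,
            ((Finset.Icc 1 (k j)).filter (fun i => y ≤ t j (i + 1) - t j i)).card
              = {q : ℝ × ℝ | ∃ l r, isExc ζ l r ∧ q = (l, r - l) ∧ y ≤ r - l}.ncard)
      ∧ ∀ l r, isExc ζ l r → y ≤ r - l →
          ∃ is : ℕ → ℕ, (∀ᶠ j in Filter.atTop, is j ∈ Finset.Icc 1 (k j)) ∧
            Filter.Tendsto (fun j => (t j (is j), t j (is j + 1) - t j (is j)))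
              Filter.atTop (nhds (l, r - l)) := by
  classical
  obtain ⟨hy0, hy1⟩ := hy
  set Cov := {s : ℝ | ∃ l r, isExc ζ l r ∧ s ∈ Set.Ioo l r} with hCovdef
  set Py := {p : ℝ × ℝ | isExc ζ p.1 p.2 ∧ y ≤ p.2 - p.1} with hPydef
  have hPyfin : Py.Finite := finite_pairs hE1 hy0
  set S := {q : ℝ × ℝ | ∃ l r, isExc ζ l r ∧ q = (l, r - l) ∧ y ≤ r - l} with hSdef
  have hSeq : S = (fun p : ℝ × ℝ => (p.1, p.2 - p.1)) '' Py := by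
    ext q
    constructor
    · rintro ⟨l, r, h1, rfl, h3⟩; exact ⟨(l, r), ⟨h1, h3⟩, rfl⟩
    · rintro ⟨p, ⟨h1, h3⟩, rfl⟩; exact ⟨p.1, p.2, h1, rfl, h3⟩
  have hSfin : S.Finite := by rw [hSeq]; exact hPyfin.image _
  have hprodinj : Function.Injective (fun p : ℝ × ℝ => (p.1, p.2 - p.1)) := by
    rintro ⟨a, b⟩ ⟨c, d⟩ h
    simp only [Prod.mk.injEq] at h
    obtain ⟨h1, h2⟩ := h
    subst h1
    have : b = d := by linarith
    rw [this]
  have hncard : S.ncard = hPyfin.toFinset.card := by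
    rw [hSeq, Set.ncard_image_of_injective _ hprodinj, Set.ncard_eq_toFinset_card _ hPyfin]
  refine ⟨⟨hSfin, ?_⟩, ?_⟩
  · -- ======== the counting part ========
    -- measure of the covered set
    have hCovsub : Cov ⊆ Set.Icc (0:ℝ) 1 := by
      rintro x ⟨l, r, hlr, h1, h2⟩
      exact ⟨le_trans hlr.1 h1.le, le_trans h2.le hlr.2.2.1⟩
    have hIccvol : volume (Set.Icc (0:ℝ) 1) = 1 := by
      rw [Real.volume_Icc]; norm_num
    have hCov1 : volume Cov = 1 := by
      refine le_antisymm ?_ ?_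
      · rw [← hIccvol]; exact measure_mono hCovsub
      · have h1 : volume (Set.Icc (0:ℝ) 1) ≤ volume Cov + volume (Set.Icc (0:ℝ) 1 \ Cov) := by
          refine le_trans (measure_mono ?_) (measure_union_le _ _)
          intro x hx
          by_cases hxc : x ∈ Cov
          · exact Or.inl hxc
          · exact Or.inr ⟨hx, hxc⟩
        rw [hE2, add_zero, hIccvol] at h1
        exact h1
    -- the set of excursion pairs is countable
    set P := {p : ℝ × ℝ | isExc ζ p.1 p.2} with hPdef
    have hPdisj : P.PairwiseDisjoint (fun p : ℝ × ℝ => Set.Ioo p.1 p.2) := by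
      rintro p hp q hq hne
      simp only [Function.onFun]
      rw [Set.disjoint_left]
      rintro x hxp hxq
      rcases lt_trichotomy p.1 q.1 with hlt | heq | hlt
      · have := exc_disj hE1 hp hq hlt
        have := hxp.2; have := hxq.1
        linarith
      · refine hne ?_
        have h2 : p.2 = q.2 := by
          refine exc_unique (ζ := ζ) (l := p.1) hp ?_
          rw [heq]; exact hq
        exact Prod.ext heq h2
      · have := exc_disj hE1 hq hp hlt
        have := hxq.2; have := hxp.1
        linarith
    have hPcnt : P.Countable :=
      hPdisj.countable_of_isOpen (fun p _ => isOpen_Ioo)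
        (fun p hp => Set.nonempty_Ioo.mpr hp.2.1)
    have hPne : P.Nonempty := by
      by_contra hno
      rw [Set.not_nonempty_iff_eq_empty] at hno
      have : Cov = ∅ := by
        rw [Set.eq_empty_iff_forall_notMem]
        rintro x ⟨l, r, hlr, hx⟩
        have : (l, r) ∈ P := hlr
        rw [hno] at this
        exact this
      rw [this] at hCov1
      simp at hCov1
    obtain ⟨f, hf⟩ := hPcnt.exists_eq_range hPne
    have hfP : ∀ n, isExc ζ (f n).1 (f n).2 := by
      intro n
      have : f n ∈ P := by rw [hf]; exact Set.mem_range_self n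
      exact this
    have hAmono : Monotone (fun n => ⋃ m ∈ Finset.range (n+1), Set.Ioo (f m).1 (f m).2) := by
      intro a b hab x hx
      simp only [Set.mem_iUnion, Finset.mem_range, exists_prop] at hx ⊢
      obtain ⟨m, h1, h2⟩ := hx
      exact ⟨m, by omega, h2⟩
    have hAU : (⋃ n, ⋃ m ∈ Finset.range (n+1), Set.Ioo (f m).1 (f m).2) = Cov := by
      ext x
      simp only [Set.mem_iUnion, Finset.mem_range, exists_prop]
      constructor
      · rintro ⟨n, m, _, hx⟩
        exact ⟨(f m).1, (f m).2, hfP m, hx⟩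
      · rintro ⟨l, r, hlr, hx⟩
        obtain ⟨m, hm⟩ : (l, r) ∈ Set.range f := by rw [← hf]; exact hlr
        exact ⟨m, m, by omega, by rw [hm]; exact hx⟩
    have htnd := tendsto_measure_iUnion_atTop (μ := volume) hAmono
    rw [hAU, hCov1] at htnd
    have hlt1 : ENNReal.ofReal (1 - y/2) < 1 := ENNReal.ofReal_lt_one.mpr (by linarith)
    obtain ⟨n₀, hn₀⟩ := (htnd.eventually (eventually_gt_nhds hlt1)).exists
    set F : Finset (ℝ × ℝ) := hPyfin.toFinset ∪ (Finset.range (n₀+1)).image f with hFdef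
    have hFP : ∀ p ∈ F, isExc ζ p.1 p.2 := by
      intro p hp
      rw [hFdef, Finset.mem_union] at hp
      rcases hp with h | h
      · exact (hPyfin.mem_toFinset.mp h).1
      · obtain ⟨m, _, rfl⟩ := Finset.mem_image.mp h
        exact hfP m
    have hPyF : hPyfin.toFinset ⊆ F := Finset.subset_union_left
    set U := ⋃ p ∈ F, Set.Ioo p.1 p.2 with hUdef
    have hAsubU : (⋃ m ∈ Finset.range (n₀+1), Set.Ioo (f m).1 (f m).2) ⊆ U := by
      intro x hx
      simp only [Set.mem_iUnion, Finset.mem_range, exists_prop] at hx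
      obtain ⟨m, hm, hx⟩ := hx
      rw [hUdef, Set.mem_iUnion₂]
      exact ⟨f m, Finset.mem_union_right _ (Finset.mem_image_of_mem f (Finset.mem_range.mpr hm)), hx⟩
    have hUsub : U ⊆ Set.Icc (0:ℝ) 1 := by
      intro x hx
      rw [hUdef, Set.mem_iUnion₂] at hx
      obtain ⟨p, hp, hx⟩ := hx
      have := hFP p hp
      exact ⟨le_trans this.1 hx.1.le, le_trans hx.2.le this.2.2.1⟩
    have hUmeas : MeasurableSet U :=
      Set.Finite.measurableSet_biUnion F.finite_toSet (fun p _ => measurableSet_Ioo)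
    have hUfin : volume U ≠ ⊤ := by
      refine ne_of_lt (lt_of_le_of_lt (measure_mono hUsub) ?_)
      rw [hIccvol]; exact ENNReal.one_lt_top
    have hD : volume (Set.Icc (0:ℝ) 1 \ U) < ENNReal.ofReal (y/2) := by
      rw [measure_diff hUsub hUmeas.nullMeasurableSet hUfin, hIccvol]
      have hvu : ENNReal.ofReal (1 - y/2) < volume U :=
        lt_of_lt_of_le hn₀ (measure_mono hAsubU)
      rw [ENNReal.sub_lt_iff_lt_right hUfin (by rw [← hIccvol]; exact measure_mono hUsub)]
      have hsplit : (1 : ℝ≥0∞) = ENNReal.ofReal (y/2) + ENNReal.ofReal (1 - y/2) := by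
        rw [← ENNReal.ofReal_add (by linarith) (by linarith)]
        norm_num
      rw [hsplit]
      exact ENNReal.add_lt_add_left ENNReal.ofReal_ne_top hvu
    -- ===== choose ε =====
    obtain ⟨n, hndef⟩ : ∃ n : ℕ, n = F.card := ⟨_, rfl⟩
    obtain ⟨β, hβdef⟩ : ∃ β : ℝ, β = y / (2*(n+1)) := ⟨_, rfl⟩
    have hn1 : (0:ℝ) < n + 1 := by positivity
    have hβ0 : 0 < β := by rw [hβdef]; positivity
    have hncast : (0:ℝ) ≤ (n:ℝ) := Nat.cast_nonneg n
    have hβy : 2 * β ≤ y := by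
      have h1 : (1:ℝ) ≤ (n:ℝ) + 1 := by linarith
      calc 2 * β = y / ((n:ℝ)+1) := by rw [hβdef]; field_simp
        _ ≤ y := div_le_self hy0.le h1
    have hε₁ex : ∃ ε₁ > 0, ∀ p ∈ hPyfin.toFinset, y + 2*ε₁ ≤ p.2 - p.1 := by
      rcases Finset.eq_empty_or_nonempty hPyfin.toFinset with he | hne
      · exact ⟨1, one_pos, fun p hp => absurd (he ▸ hp) (Finset.notMem_empty p)⟩
      · refine ⟨hPyfin.toFinset.inf' hne (fun p => (p.2 - p.1 - y)/2), ?_, ?_⟩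
        · rw [gt_iff_lt, Finset.lt_inf'_iff]
          intro p hp
          have hmem := hPyfin.mem_toFinset.mp hp
          have hney : p.2 - p.1 ≠ y := fun he2 => hyne ⟨p.1, p.2, hmem.1, he2⟩
          have : y < p.2 - p.1 := lt_of_le_of_ne hmem.2 (Ne.symm hney)
          linarith
        · intro p hp
          have h1 := Finset.inf'_le (fun p : ℝ × ℝ => (p.2 - p.1 - y)/2) hp
          linarith
    obtain ⟨ε₁, hε₁0, hε₁⟩ := hε₁ex
    have hε₂ex : ∃ ε₂ > 0, ∀ p ∈ F, p ∉ hPyfin.toFinset → p.2 - p.1 < y - 2*ε₂ := by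
      set Fs := F.filter (fun p => p ∉ hPyfin.toFinset) with hFsdef
      have hFsmall : ∀ p ∈ Fs, p.2 - p.1 < y := by
        intro p hp
        rw [hFsdef, Finset.mem_filter] at hp
        have hexc := hFP p hp.1
        by_contra hc
        push_neg at hc
        exact hp.2 (hPyfin.mem_toFinset.mpr ⟨hexc, hc⟩)
      rcases Finset.eq_empty_or_nonempty Fs with he | hne
      · refine ⟨1, one_pos, fun p hp hnp => ?_⟩
        have hm : p ∈ Fs := Finset.mem_filter.mpr ⟨hp, hnp⟩
        rw [he] at hm
        exact absurd hm (Finset.notMem_empty p)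
      · refine ⟨Fs.inf' hne (fun p => (y - (p.2 - p.1))/4), ?_, ?_⟩
        · rw [gt_iff_lt, Finset.lt_inf'_iff]
          intro p hp
          have := hFsmall p hp
          linarith
        · intro p hp hnp
          have hmem : p ∈ Fs := Finset.mem_filter.mpr ⟨hp, hnp⟩
          have h1 := Finset.inf'_le (fun p : ℝ × ℝ => (y - (p.2 - p.1))/4) hmem
          have h2 := hFsmall p hmem
          have h3 : (0:ℝ) < (y - (p.2 - p.1))/4 := by linarith
          linarith
    obtain ⟨ε₂, hε₂0, hε₂⟩ := hε₂ex
    set ε := min (β/3) (min ε₁ ε₂) with hεdef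
    have hε0 : 0 < ε := lt_min (by positivity) (lt_min hε₁0 hε₂0)
    have hεβ : ε ≤ β/3 := min_le_left _ _
    have hεε₁ : ε ≤ ε₁ := le_trans (min_le_right _ _) (min_le_left _ _)
    have hεε₂ : ε ≤ ε₂ := le_trans (min_le_right _ _) (min_le_right _ _)
    have hεy : 6 * ε ≤ y := by
      have : 6 * ε ≤ 2 * β := by linarith
      linarith
    -- ===== eventual localization on all of F =====
    have hloc : ∀ᶠ j in Filter.atTop, ∀ p ∈ F, 2*ε ≤ p.2 - p.1 →
        ∃ i, locP t k p.1 p.2 ε j i := by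
      rw [Filter.eventually_all_finset]
      intro p hp
      by_cases hsz : 2*ε ≤ p.2 - p.1
      · exact (loc_eventually hζ hE1 hE2 ζs hconv k hk t ht0 ht1 htmono htmin htgap
          (hFP p hp) hε0 (by linarith)).mono (fun j hj _ => hj)
      · exact Filter.Eventually.of_forall (fun j h => absurd h hsz)
    filter_upwards [hloc] with j hj
    rw [hncard]
    have hEyF2ε : ∀ p ∈ hPyfin.toFinset, 2*ε ≤ p.2 - p.1 := by
      intro p hp
      have hmem := hPyfin.mem_toFinset.mp hp
      linarith [hmem.2]
    have hφ : ∀ p (hp : p ∈ hPyfin.toFinset), ∃ i, locP t k p.1 p.2 ε j i :=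
      fun p hp => hj p (hPyF hp) (hEyF2ε p hp)
    refine (Finset.card_bij (fun p hp => (hφ p hp).choose) ?_ ?_ ?_).symm
    · -- maps into the filter set
      intro p hp
      obtain ⟨h1, h2, h3, h4, h5, h6⟩ := (hφ p hp).choose_spec
      rw [Finset.mem_filter, Finset.mem_Icc]
      have hmem := hPyfin.mem_toFinset.mp hp
      have hlen := hε₁ p hp
      refine ⟨⟨h1, h2⟩, ?_⟩
      linarith
    · -- injective
      intro p hp q hq heq
      change (hφ p hp).choose = (hφ q hq).choose at heq
      by_contra hne
      obtain hp1 := (hφ p hp).choose_spec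
      obtain hq1 := (hφ q hq).choose_spec
      rw [heq] at hp1
      have hpm := hPyfin.mem_toFinset.mp hp
      have hqm := hPyfin.mem_toFinset.mp hq
      rcases lt_trichotomy p.1 q.1 with hlt | hee | hlt
      · have hsep := exc_sep hE1 hpm.1 hqm.1 hpm.2 hlt
        have := hp1.2.2.2.1
        have := hq1.2.2.1
        linarith
      · refine hne ?_
        have h2 : p.2 = q.2 := by
          refine exc_unique (ζ := ζ) (l := p.1) hpm.1 ?_
          rw [hee]; exact hqm.1
        exact Prod.ext hee h2
      · have hsep := exc_sep hE1 hqm.1 hpm.1 hqm.2 hlt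
        have := hq1.2.2.2.1
        have := hp1.2.2.1
        linarith
    · -- surjective
      intro b hb
      rw [Finset.mem_filter, Finset.mem_Icc] at hb
      obtain ⟨⟨hb1, hbk⟩, hby⟩ := hb
      have htb0 : t j b ∈ Set.Icc (0:ℝ) 1 := t_mem k t ht0 ht1 htmono j b hb1 (by omega)
      have htb1 : t j (b+1) ∈ Set.Icc (0:ℝ) 1 :=
        t_mem k t ht0 ht1 htmono j (b+1) (by omega) (by omega)
      set I := Set.Icc (t j b) (t j (b+1)) with hIdef
      have hIsub : I ⊆ Set.Icc (0:ℝ) 1 := Set.Icc_subset_Icc htb0.1 htb1.2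
      have hIv : ENNReal.ofReal y ≤ volume I := by
        rw [hIdef, Real.volume_Icc]; exact ENNReal.ofReal_le_ofReal hby
      have hcover : I ⊆ (⋃ p ∈ F, I ∩ Set.Ioo p.1 p.2) ∪ (Set.Icc (0:ℝ) 1 \ U) := by
        intro x hx
        by_cases hxU : x ∈ U
        · left
          rw [hUdef, Set.mem_iUnion₂] at hxU
          obtain ⟨p, hp, hxp⟩ := hxU
          rw [Set.mem_iUnion₂]
          exact ⟨p, hp, hx, hxp⟩
        · exact Or.inr ⟨hIsub hx, hxU⟩
      have hsum : ENNReal.ofReal y ≤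
          (∑ p ∈ F, volume (I ∩ Set.Ioo p.1 p.2)) + ENNReal.ofReal (y/2) := by
        calc ENNReal.ofReal y ≤ volume I := hIv
          _ ≤ volume ((⋃ p ∈ F, I ∩ Set.Ioo p.1 p.2) ∪ (Set.Icc (0:ℝ) 1 \ U)) :=
              measure_mono hcover
          _ ≤ volume (⋃ p ∈ F, I ∩ Set.Ioo p.1 p.2) + volume (Set.Icc (0:ℝ) 1 \ U) :=
              measure_union_le _ _
          _ ≤ (∑ p ∈ F, volume (I ∩ Set.Ioo p.1 p.2)) + ENNReal.ofReal (y/2) :=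
              add_le_add (measure_biUnion_finset_le F _) hD.le
      have hpigeon : ∃ p ∈ F, ENNReal.ofReal β ≤ volume (I ∩ Set.Ioo p.1 p.2) := by
        by_contra hc
        push_neg at hc
        have hub : ∀ p ∈ F, volume (I ∩ Set.Ioo p.1 p.2) ≤ ENNReal.ofReal β :=
          fun p hp => (hc p hp).le
        have h1 : (∑ p ∈ F, volume (I ∩ Set.Ioo p.1 p.2)) ≤ F.card • ENNReal.ofReal β :=
          Finset.sum_le_card_nsmul F _ _ hub
        rw [← hndef] at h1
        have h2 : (n • ENNReal.ofReal β : ℝ≥0∞) = ENNReal.ofReal (n * β) := by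
          rw [nsmul_eq_mul, ← ENNReal.ofReal_natCast n, ← ENNReal.ofReal_mul (by positivity)]
        have h3 : ENNReal.ofReal y ≤ ENNReal.ofReal (n * β + y/2) := by
          rw [ENNReal.ofReal_add (by positivity) (by linarith)]
          exact le_trans hsum (add_le_add_left (le_trans h1 (le_of_eq h2)) _)
        have h4 : y ≤ n * β + y/2 :=
          (ENNReal.ofReal_le_ofReal_iff (by positivity)).mp h3
        have h5 : (n:ℝ) * β < y/2 := by
          rw [hβdef, ← mul_div_assoc, div_lt_div_iff₀ (by positivity) (by norm_num)]
          nlinarith [hy0]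
        linarith
      obtain ⟨p, hpF, hpover⟩ := hpigeon
      have hpexc := hFP p hpF
      set a' := max (t j b) p.1 with ha'def
      set b' := min (t j (b+1)) p.2 with hb'def
      have hsub2 : I ∩ Set.Ioo p.1 p.2 ⊆ Set.Icc a' b' := by
        rintro x ⟨⟨h1, h2⟩, h3, h4⟩
        exact ⟨max_le h1 h3.le, le_min h2 h4.le⟩
      have hba : β ≤ b' - a' := by
        have hle := le_trans hpover (measure_mono hsub2)
        rw [Real.volume_Icc] at hle
        by_contra hcc
        push_neg at hcc
        exact absurd hle (not_le.mpr ((ENNReal.ofReal_lt_ofReal_iff hβ0).mpr hcc))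
      have ha'1 : p.1 ≤ a' := le_max_right _ _
      have ha'2 : t j b ≤ a' := le_max_left _ _
      have hb'1 : b' ≤ p.2 := min_le_right _ _
      have hb'2 : b' ≤ t j (b+1) := min_le_left _ _
      have hlenβ : β ≤ p.2 - p.1 := by linarith
      obtain ⟨istar, histar⟩ := hj p hpF (by linarith)
      obtain ⟨hi1, hik, hg1, hg2, hg3, hg4⟩ := histar
      -- c₁ := a' + β/3, c₂ := a' + 2β/3
      have hkey1 : t j b ≤ a' + β/3 := by linarith
      have hkey2 : a' + 2*β/3 ≤ t j (b+1) := by linarith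
      have hkey3 : t j istar ≤ a' + β/3 := by linarith
      have hkey4 : a' + 2*β/3 < t j (istar+1) := by linarith
      have hbi : b = istar := by
        by_contra hne
        rcases Nat.lt_or_ge b istar with hlt | hge
        · have := t_mono k t htmono j (b+1) istar (by omega) (by omega) (by omega)
          linarith
        · have hlt : istar < b := by omega
          have := t_mono k t htmono j (istar+1) b (by omega) (by omega) (by omega)
          linarith
      rw [← hbi] at hg1 hg2 hg3 hg4
      have hpEy : p ∈ hPyfin.toFinset := by
        by_contra hno
        have hsmall := hε₂ p hpF hno
        -- p.2 - p.1 > y - 2ε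
        have : y - 2*ε ≤ p.2 - p.1 := by linarith
        linarith
      refine ⟨p, hpEy, ?_⟩
      have hplen := hPyfin.mem_toFinset.mp hpEy
      show (hφ p hpEy).choose = b
      refine locP_unique k t htmono (l := p.1) (r := p.2) (ε := ε) ?_
        ((hφ p hpEy).choose_spec) ?_
      · have := hplen.2
        linarith
      · exact ⟨hb1, hbk, hg1, hg2, hg3, hg4⟩

  · -- ======== part (b) ========
    intro l r hlr hylen
    have hrl0 : 0 < r - l := by linarith [hlr.2.1]
    have hc0 : 0 < (r - l)/3 := by linarith
    have hcle : l + (r-l)/3 ≤ r - (r-l)/3 := by linarith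
    have hise : ∀ᶠ j in Filter.atTop, ∃ i, locP t k l r ((r-l)/3) j i :=
      loc_eventually hζ hE1 hE2 ζs hconv k hk t ht0 ht1 htmono htmin htgap hlr hc0 hcle
    obtain ⟨is0, his0⟩ : ∃ is0 : ℕ → ℕ, ∀ j, (∃ i, locP t k l r ((r-l)/3) j i) →
        locP t k l r ((r-l)/3) j (is0 j) := by
      choose g hg using fun j (h : ∃ i, locP t k l r ((r-l)/3) j i) => h
      refine ⟨fun j => if h : ∃ i, locP t k l r ((r-l)/3) j i then g j h else 1, ?_⟩
      intro j h
      show locP t k l r ((r-l)/3) j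
        (if h' : ∃ i, locP t k l r ((r-l)/3) j i then g j h' else 1)
      rw [dif_pos h]
      exact hg j h
    refine ⟨is0, ?_, ?_⟩
    · filter_upwards [hise] with j hj
      exact Finset.mem_Icc.mpr ⟨(his0 j hj).1, (his0 j hj).2.1⟩
    · have key : ∀ ε' > (0:ℝ), ∀ᶠ j in Filter.atTop,
          |t j (is0 j) - l| < ε' ∧ |t j (is0 j + 1) - r| < ε' := by
        intro ε' hε'
        have hε''0 : 0 < min (ε'/2) ((r-l)/3) := lt_min (by linarith) hc0
        have hε''le : min (ε'/2) ((r-l)/3) ≤ (r-l)/3 := min_le_right _ _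
        have hε''lt : min (ε'/2) ((r-l)/3) < ε' := lt_of_le_of_lt (min_le_left _ _) (by linarith)
        have hloc2 := loc_eventually hζ hE1 hE2 ζs hconv k hk t ht0 ht1 htmono htmin htgap
          hlr hε''0 (by linarith [hε''le])
        filter_upwards [hise, hloc2] with j hj hj2
        obtain ⟨i', hi'⟩ := hj2
        have hi'c : locP t k l r ((r-l)/3) j i' := by
          obtain ⟨a1, a2, a3, a4, a5, a6⟩ := hi'
          exact ⟨a1, a2, by linarith, by linarith, by linarith, by linarith⟩
        have heq : is0 j = i' := locP_unique k t htmono hcle (his0 j hj) hi'c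
        rw [heq]
        obtain ⟨a1, a2, a3, a4, a5, a6⟩ := hi'
        constructor
        · rw [abs_lt]; constructor <;> linarith
        · rw [abs_lt]; constructor <;> linarith
      have hA : Filter.Tendsto (fun j => t j (is0 j)) Filter.atTop (nhds l) := by
        rw [Metric.tendsto_nhds]
        intro ε' hε'
        filter_upwards [key ε' hε'] with j hj
        rw [Real.dist_eq]
        exact hj.1
      have hB : Filter.Tendsto (fun j => t j (is0 j + 1)) Filter.atTop (nhds r) := by
        rw [Metric.tendsto_nhds]
        intro ε' hε'
        filter_upwards [key ε' hε'] with j hj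
        rw [Real.dist_eq]
        exact hj.2
      exact hA.prodMk_nhds (hB.sub hA)
end Parking
end

section
/- For each j, let Θ^{(j)} be a finite multiset of points of [0,1] × (0,1] whose second coordinates sum to 1, and let Θ be a countable multiset of points of [0,1] × (0,1] whose second coordinates sum to 1. Assume that for every y ∈ (0,1] such that no point of Θ has second coordinate equal to y: (a) for all j large enough, the number of points (with multiplicity) of Θ^{(j)} with second coordinate ≥ y equals the number of points of Θ with second coordinate ≥ y; and (b) every point of Θ with second coordinate ≥ y is the limit of a sequence of points of Θ^{(j)}. Let (b^{(j)}_k)_{k≥1} and (b_k)_{k≥1} be the decreasing rearrangements (padded with zeros) of the second coordinates of Θ^{(j)} and of Θ, respectively. Then b^{(j)} converges to b componentwise and in ℓ¹: for every k, b^{(j)}_k → b_k, and Σ_{k≥1} |b^{(j)}_k − b_k| → 0 as j → ∞. -/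
/-!
For a level `y > 0` carrying no atom of `Θ`, hypothesis (a) says that eventually `Θ^{(j)}` and
`Θ` have equally many lengths `≥ y`. Since the `k`-th ranked value of a family is `≥ y` exactly
when more than `k` of its values are, `b^{(j)}_k` and `b_k` then lie on the same side of `y`;
such levels are dense, which gives componentwise convergence. Equal level counts also make `b`
and the lengths of `Θ` equimeasurable for counting measure, so the layer-cake formula gives
`∑ b_k = 1 = ∑ b^{(j)}_k`, and Scheffé's lemma (`|x - y| = x + y - 2 min x y`, with dominated
convergence for the minima) upgrades componentwise convergence to `ℓ¹`.
-/

open Filter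
open scoped BigOperators

attribute [local instance] Classical.propDecidable

namespace Parking

/-- `descList s k` : the `k`-th term (0-indexed) of the decreasing rearrangement of the
finite multiset `s` of reals, padded with zeros. -/
noncomputable def descList (s : Multiset ℝ) (k : ℕ) : ℝ :=
  ((Multiset.sort s (· ≤ ·)).reverse).getD k 0

end Parking

open Topology MeasureTheory

theorem List.le_getD_iff_lt_countP {α : Type*} [LinearOrder α] {d y : α} (hy : d < y)
    {l : List α} (hl : l.Pairwise (· ≥ ·)) (k : ℕ) :
    y ≤ l.getD k d ↔ k < l.countP (y ≤ ·) := by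
  induction l generalizing k with
  | nil => simpa using hy
  | cons a t ih =>
    rw [List.pairwise_cons] at hl
    by_cases ha : y ≤ a
    · cases k with
      | zero => simp [ha]
      | succ k => simp only [List.getD_cons_succ, ih hl.2, List.countP_cons, ha]; simp
    · have ht : t.countP (y ≤ ·) = 0 :=
        List.countP_eq_zero.2 fun x hx => by simpa using (hl.1 x hx).trans_lt (not_le.1 ha)
      cases k with
      | zero => simp [ha, ht]
      | succ k => simp only [List.getD_cons_succ, ih hl.2, List.countP_cons, ha, ht]; simp

theorem List.getD_mem_or_eq {α : Type*} (l : List α) (k : ℕ) (d : α) :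
    l.getD k d ∈ l ∨ l.getD k d = d := by
  rw [List.getD_eq_getElem?_getD]
  cases h : l[k]? with
  | none => simp
  | some x => exact .inl (List.mem_of_getElem? h)

theorem List.hasSum_getD {M : Type*} [AddCommMonoid M] [TopologicalSpace M] (l : List M) :
    HasSum (l.getD · 0) l.sum := by
  have h : HasSum (l.getD · 0) (∑ k ∈ Finset.range l.length, l.getD k 0) :=
    hasSum_sum_of_ne_finset_zero fun k hk => List.getD_eq_default _ _ (by simpa using hk)
  convert h using 1
  rw [Finset.sum_range, ← Fin.sum_univ_getElem]
  simp

theorem Antitone.le_iff_lt_ncard {α : Type*} [Preorder α] {b : ℕ → α} (hb : Antitone b)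
    {y : α} (hfin : {k | y ≤ b k}.Finite) (k : ℕ) : y ≤ b k ↔ k < {k | y ≤ b k}.ncard := by
  have hlow : IsLowerSet {k | y ≤ b k} := fun _ _ hij hj => hj.trans (hb hij)
  obtain h | ⟨n, hn⟩ := hlow.eq_univ_or_Iio
  · exact absurd (h ▸ hfin) Set.infinite_univ
  · change k ∈ {k | y ≤ b k} ↔ _
    simp [hn]

theorem tendsto_of_eventually_le_iff_off_countable {α : Type*} {l : Filter α} {u : α → ℝ} {a c : ℝ}
    {C : Set ℝ} (hC : C.Countable) (hu : ∀ n, c ≤ u n) (ha : c ≤ a)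
    (h : ∀ y, c < y → y ∉ C → ∀ᶠ n in l, (y ≤ u n ↔ y ≤ a)) : Tendsto u l (𝓝 a) := by
  have hdense : Dense Cᶜ := hC.dense_compl ℝ
  refine tendsto_order.2 ⟨fun m hm => ?_, fun M hM => ?_⟩
  · rcases lt_or_ge c a with hca | hac
    · obtain ⟨y, hyC, hy, hya⟩ := hdense.exists_between (max_lt hm hca)
      rw [max_lt_iff] at hy
      filter_upwards [h y hy.2 hyC] with n hn
      exact hy.1.trans_le (hn.2 hya.le)
    · exact Eventually.of_forall fun n => (hm.trans_le hac).trans_le (hu n)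
  · obtain ⟨y, hyC, hay, hyM⟩ := hdense.exists_between hM
    filter_upwards [h y (ha.trans_lt hay) hyC] with n hn
    exact (not_le.1 fun hy => lt_irrefl a (hay.trans_le (hn.1 hy))).trans hyM

theorem tendsto_tsum_abs_sub_of_tendsto {α β : Type*} {l : Filter α} {f : α → β → ℝ}
    {g : β → ℝ} (hf0 : ∀ n k, 0 ≤ f n k) (hg0 : ∀ k, 0 ≤ g k) (hf : ∀ n, Summable (f n))
    (hg : Summable g) (hlim : ∀ k, Tendsto (f · k) l (𝓝 (g k)))
    (hsum : Tendsto (fun n => ∑' k, f n k) l (𝓝 (∑' k, g k))) :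
    Tendsto (fun n => ∑' k, |f n k - g k|) l (𝓝 0) := by
  have hmin : Tendsto (fun n => ∑' k, min (f n k) (g k)) l (𝓝 (∑' k, g k)) :=
    tendsto_tsum_of_dominated_convergence hg
      (fun k => by simpa using (hlim k).min (tendsto_const_nhds (x := g k)))
      (Eventually.of_forall fun n k => by
        rw [Real.norm_of_nonneg (le_min (hf0 n k) (hg0 k))]; exact min_le_right _ _)
  have hmin_summable : ∀ n, Summable fun k => min (f n k) (g k) := fun n =>
    hg.of_nonneg_of_le (fun k => le_min (hf0 n k) (hg0 k)) fun k => min_le_right _ _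
  have hident : ∀ n, ∑' k, |f n k - g k|
      = ∑' k, f n k + ∑' k, g k - 2 * ∑' k, min (f n k) (g k) := fun n => by
    rw [← (hf n).tsum_add hg, ← tsum_mul_left, ← ((hf n).add hg).tsum_sub
      ((hmin_summable n).mul_left 2)]
    congr 1 with k
    rw [← max_sub_min_eq_abs', ← min_add_max (f n k) (g k)]
    ring
  simp_rw [hident]
  convert (hsum.add_const (∑' k, g k)).sub (hmin.const_mul 2) using 2
  ring

theorem tsum_ofReal_eq_of_encard_superlevel_eq {ι κ : Type*} {f : ι → ℝ} {g : κ → ℝ}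
    (hf0 : ∀ i, 0 ≤ f i) (hg0 : ∀ k, 0 ≤ g k)
    (h : ∀ y, 0 < y → {i | y ≤ f i}.encard = {k | y ≤ g k}.encard) :
    ∑' i, ENNReal.ofReal (f i) = ∑' k, ENNReal.ofReal (g k) := by
  let _ : MeasurableSpace ι := ⊤
  let _ : MeasurableSpace κ := ⊤
  rw [← lintegral_count, ← lintegral_count,
    lintegral_eq_lintegral_meas_le _ (.of_forall hf0) measurable_from_top.aemeasurable,
    lintegral_eq_lintegral_meas_le _ (.of_forall hg0) measurable_from_top.aemeasurable]
  refine setLIntegral_congr_fun measurableSet_Ioi fun y hy => ?_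
  rw [Measure.count_apply MeasurableSpace.measurableSet_top,
    Measure.count_apply MeasurableSpace.measurableSet_top, h y hy]

theorem HasSum.of_encard_superlevel_eq {ι κ : Type*} {f : ι → ℝ} {g : κ → ℝ} {a : ℝ}
    (hf : HasSum f a) (hf0 : ∀ i, 0 ≤ f i) (hg0 : ∀ k, 0 ≤ g k)
    (h : ∀ y, 0 < y → {i | y ≤ f i}.encard = {k | y ≤ g k}.encard) : HasSum g a := by
  have hsum : ∑' k, ENNReal.ofReal (g k) = ENNReal.ofReal a := by
    rw [← tsum_ofReal_eq_of_encard_superlevel_eq hf0 hg0 h,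
      ← ENNReal.ofReal_tsum_of_nonneg hf0 hf.summable, hf.tsum_eq]
  have hne : ∑' k, ENNReal.ofReal (g k) ≠ ⊤ := hsum ▸ ENNReal.ofReal_ne_top
  have hg : Summable g := by
    simpa [ENNReal.toReal_ofReal (hg0 _)] using ENNReal.summable_toReal hne
  convert hg.hasSum
  rw [← ENNReal.toReal_ofReal (hasSum_le hf0 hasSum_zero hf), ← hsum,
    ENNReal.tsum_toReal_eq fun _ => ENNReal.ofReal_ne_top]
  simp [ENNReal.toReal_ofReal (hg0 _)]

theorem Summable.finite_setOf_le {ι : Type*} {f : ι → ℝ} (hf : Summable f) {y : ℝ} (hy : 0 < y) :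
    {i | y ≤ f i}.Finite := by
  simpa using eventually_cofinite.1 (hf.tendsto_cofinite_zero.eventually (gt_mem_nhds hy))

namespace Parking

theorem le_descList_iff (s : Multiset ℝ) {y : ℝ} (hy : 0 < y) (k : ℕ) :
    y ≤ descList s k ↔ k < Multiset.card (s.filter (y ≤ ·)) := by
  have hsorted : (s.sort (· ≤ ·)).reverse.Pairwise (· ≥ ·) :=
    List.pairwise_reverse.2 (s.pairwise_sort _)
  rw [descList, List.le_getD_iff_lt_countP hy hsorted, ← Multiset.coe_countP,
    Multiset.coe_reverse, Multiset.sort_eq, Multiset.countP_eq_card_filter]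

theorem descList_nonneg {s : Multiset ℝ} (hs : ∀ x ∈ s, 0 ≤ x) (k : ℕ) : 0 ≤ descList s k :=
  (List.getD_mem_or_eq _ k 0).elim (fun h => hs _ ((s.mem_sort _).1 (List.mem_reverse.1 h)))
    fun h => h.ge

theorem hasSum_descList (s : Multiset ℝ) : HasSum (descList s) s.sum := by
  have h := List.hasSum_getD (s.sort (· ≤ ·)).reverse
  rwa [List.sum_reverse, ← Multiset.sum_coe, Multiset.sort_eq] at h

/-- If finite point processes `Θ_j` on `[0,1] × (0,1]` whose second coordinates sum to `1`
converge vaguely to a point process `Θ` (indexed by a countable family `θ : ι → ℝ × ℝ`)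
whose second coordinates sum to `1`, then the decreasing rearrangements of the second
coordinates converge componentwise and in `ℓ¹`. -/
theorem ranked_lengths_converge {ι : Type*} [Countable ι]
    (Θs : ℕ → Multiset (ℝ × ℝ))
    (hΘs1 : ∀ j, ∀ q ∈ Θs j, q.1 ∈ Set.Icc (0 : ℝ) 1 ∧ q.2 ∈ Set.Ioc (0 : ℝ) 1)
    (hΘs2 : ∀ j, ((Θs j).map Prod.snd).sum = 1)
    (θ : ι → ℝ × ℝ)
    (hθ1 : ∀ i, (θ i).1 ∈ Set.Icc (0 : ℝ) 1 ∧ (θ i).2 ∈ Set.Ioc (0 : ℝ) 1)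
    (hθsum : Summable (fun i => (θ i).2)) (hθ2 : ∑' i, (θ i).2 = 1)
    (hvague : ∀ y : ℝ, 0 < y → (¬ ∃ i, (θ i).2 = y) →
      ({i | y ≤ (θ i).2}.Finite
        ∧ (∀ᶠ j in Filter.atTop,
            (((Θs j).filter (fun q => y ≤ q.2)).card : ℕ) = {i | y ≤ (θ i).2}.ncard)
        ∧ ∀ i, y ≤ (θ i).2 → ∃ q : ℕ → ℝ × ℝ,
            (∀ᶠ j in Filter.atTop, q j ∈ Θs j)
              ∧ Filter.Tendsto q Filter.atTop (nhds (θ i))))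
    (b : ℕ → ℝ) (hbmono : Antitone b) (hbnn : ∀ k, 0 ≤ b k)
    (hbcount : ∀ y : ℝ, 0 < y →
      {k | y ≤ b k}.Finite ∧ {k | y ≤ b k}.ncard = {i | y ≤ (θ i).2}.ncard) :
    (∀ k, Filter.Tendsto (fun j => descList ((Θs j).map Prod.snd) k)
        Filter.atTop (nhds (b k)))
      ∧ Filter.Tendsto (fun j => ∑' k : ℕ, |descList ((Θs j).map Prod.snd) k - b k|)
          Filter.atTop (nhds 0) := by
  set S : ℕ → Multiset ℝ := fun j => (Θs j).map Prod.snd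
  have hS0 : ∀ j, ∀ x ∈ S j, 0 ≤ x := fun j x hx => by
    obtain ⟨q, hq, rfl⟩ := Multiset.mem_map.1 hx
    exact (hΘs1 j q hq).2.1.le
  have hb : HasSum b 1 := HasSum.of_encard_superlevel_eq (hθ2 ▸ hθsum.hasSum)
    (fun i => (hθ1 i).2.1.le) hbnn fun y hy => by
      rw [← (hθsum.finite_setOf_le hy).cast_ncard_eq, ← (hbcount y hy).1.cast_ncard_eq,
        (hbcount y hy).2]
  have hcomp : ∀ k, Tendsto (fun j => descList (S j) k) atTop (𝓝 (b k)) := fun k =>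
    tendsto_of_eventually_le_iff_off_countable (Set.countable_range fun i => (θ i).2)
      (fun j => descList_nonneg (hS0 j) k) (hbnn k) fun y hy hyθ => by
        filter_upwards [(hvague y hy hyθ).2.1] with j hj
        rw [le_descList_iff _ hy, Multiset.filter_map, Multiset.card_map,
          hbmono.le_iff_lt_ncard (hbcount y hy).1, (hbcount y hy).2]
        -- the two filters differ in their decidability instances, so `rw [hj]` fails
        exact hj ▸ Iff.rfl
  refine ⟨hcomp, tendsto_tsum_abs_sub_of_tendsto (fun j => descList_nonneg (hS0 j)) hbnn
    (fun j => (hasSum_descList _).summable) hb.summable hcomp ?_⟩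
  simp [(hasSum_descList _).tsum_eq, hΘs2, hb.tsum_eq]

end Parking
end
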